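/- Let ν be a Borel probability measure on ℝ^d and E : P_{2,ν}(ℝ^{2d}) → (−∞,+∞] a λ-geodesically convex functional with respect to W_{2,ν}. Let μ ∈ D(E) and u ∈ L²_μ(ℝ^{2d},ℝ^d). Then u belongs to the fibered Fréchet subdifferential ∂_{W_{2,ν}}E[μ] if and only if for every σ ∈ D(E) and every γ ∈ Γ_{o,ν}(μ,σ) along whose associated geodesic E is λ-convex, E[σ] − E[μ] ≥ ∫_{ℝ^{4d}} u(x,ω)·(x'−x) dγ(x,x',ω,ω') + (λ/2) W_{2,ν}²(μ,σ). -/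

import Mathlib

open MeasureTheory Filter Topology
open scoped ENNReal RealInnerProductSpace

noncomputable section

namespace FGF

/-- Euclidean space `ℝ^d`. -/
abbrev Rd (d : ℕ) : Type := EuclideanSpace ℝ (Fin d)

/-- `γ` is a coupling (transference plan) of `μ` and `ν`. -/
def IsCoupling {X Y : Type*} [MeasurableSpace X] [MeasurableSpace Y]
    (γ : Measure (X × Y)) (μ : Measure X) (ν : Measure Y) : Prop :=
  γ.map Prod.fst = μ ∧ γ.map Prod.snd = ν

/-- Squared quadratic Wasserstein distance. -/
def W2sq {X : Type*} [MeasurableSpace X] [NormedAddCommGroup X] (μ ν : Measure X) : ℝ≥0∞ :=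
  ⨅ (γ : Measure (X × X)) (_ : IsCoupling γ μ ν), ∫⁻ p, (‖p.1 - p.2‖₊ : ℝ≥0∞) ^ 2 ∂γ

/-- Quadratic Wasserstein distance `W₂`. -/
def W2 {X : Type*} [MeasurableSpace X] [NormedAddCommGroup X] (μ ν : Measure X) : ℝ :=
  Real.sqrt (W2sq μ ν).toReal

/-- `γ` is an optimal coupling of `μ` and `ν` for the quadratic cost. -/
def IsOptimalCoupling {X : Type*} [MeasurableSpace X] [NormedAddCommGroup X]
    (γ : Measure (X × X)) (μ ν : Measure X) : Prop :=
  IsCoupling γ μ ν ∧ (∫⁻ p, (‖p.1 - p.2‖₊ : ℝ≥0∞) ^ 2 ∂γ) = W2sq μ ν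

open Classical in
/-- The disintegration fibers: `μ(x,y) = (fiber μ y)(x) ⊗ (snd marginal)(y)`. -/
def fiber {X Y : Type*} [MeasurableSpace X] [MeasurableSpace Y]
    [StandardBorelSpace X] [Nonempty X] (μ : Measure (X × Y)) (y : Y) : Measure X :=
  if h : IsFiniteMeasure μ then
    haveI := h
    (μ.map Prod.swap).condKernel y
  else 0

/-- Membership in the fibered space `P_{2,ν}`: probability measures with second marginal `ν`
and finite second moment in the first variable. -/
def MemP2nu {X Y : Type*} [MeasurableSpace X] [NormedAddCommGroup X] [MeasurableSpace Y]
    (ν : Measure Y) (μ : Measure (X × Y)) : Prop :=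
  IsProbabilityMeasure μ ∧ μ.map Prod.snd = ν ∧ (∫⁻ p, (‖p.1‖₊ : ℝ≥0∞) ^ 2 ∂μ) < ⊤

/-- Squared fibered Wasserstein distance `W_{2,ν}²`. -/
def W2nuSq {X Y : Type*} [MeasurableSpace X] [NormedAddCommGroup X] [StandardBorelSpace X]
    [Nonempty X] [MeasurableSpace Y] (ν : Measure Y) (μ₁ μ₂ : Measure (X × Y)) : ℝ≥0∞ :=
  ∫⁻ y, W2sq (fiber μ₁ y) (fiber μ₂ y) ∂ν

/-- Fibered Wasserstein distance `W_{2,ν}` (real-valued). -/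
def W2nu {X Y : Type*} [MeasurableSpace X] [NormedAddCommGroup X] [StandardBorelSpace X]
    [Nonempty X] [MeasurableSpace Y] (ν : Measure Y) (μ₁ μ₂ : Measure (X × Y)) : ℝ :=
  Real.sqrt (W2nuSq ν μ₁ μ₂).toReal

/-- Fibered Wasserstein distance, `ℝ≥0∞`-valued. -/
def eW2nu {X Y : Type*} [MeasurableSpace X] [NormedAddCommGroup X] [StandardBorelSpace X]
    [Nonempty X] [MeasurableSpace Y] (ν : Measure Y) (μ₁ μ₂ : Measure (X × Y)) : ℝ≥0∞ :=
  (W2nuSq ν μ₁ μ₂) ^ ((1 : ℝ)/2)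

/-- ν-admissible transference plans: couplings of `μ₁,μ₂` whose `(ω,ω')`-marginal is
concentrated on the diagonal. -/
def IsAdmissiblePlan {X Y : Type*} [MeasurableSpace X] [MeasurableSpace Y]
    (μ₁ μ₂ : Measure (X × Y)) (γ : Measure ((X × Y) × (X × Y))) : Prop :=
  IsCoupling γ μ₁ μ₂ ∧ γ {p | p.1.2 = p.2.2}ᶜ = 0

/-- Transport cost `∫ |x - x'|² dγ` of a plan. -/
def planCost {X Y : Type*} [MeasurableSpace X] [NormedAddCommGroup X] [MeasurableSpace Y]
    (γ : Measure ((X × Y) × (X × Y))) : ℝ≥0∞ :=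
  ∫⁻ p, (‖p.1.1 - p.2.1‖₊ : ℝ≥0∞) ^ 2 ∂γ

/-- Optimal ν-admissible transference plans, realizing `W_{2,ν}²`. -/
def IsOptimalAdmissiblePlan {X Y : Type*} [MeasurableSpace X] [NormedAddCommGroup X]
    [StandardBorelSpace X] [Nonempty X] [MeasurableSpace Y]
    (ν : Measure Y) (μ₁ μ₂ : Measure (X × Y)) (γ : Measure ((X × Y) × (X × Y))) : Prop :=
  IsAdmissiblePlan μ₁ μ₂ γ ∧ planCost γ = W2nuSq ν μ₁ μ₂

/-- ν-random continuous functions. -/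
def NuRandomCont {X Y : Type*} [TopologicalSpace X] [MeasurableSpace Y]
    (ν : Measure Y) (φ : X → Y → ℝ) : Prop :=
  (∀ x, Measurable fun y => φ x y) ∧ (∀ y, Continuous fun x => φ x y) ∧
    (∀ y, ∃ C : ℝ, ∀ x, |φ x y| ≤ C) ∧ (∫⁻ y, ⨆ x, (‖φ x y‖₊ : ℝ≥0∞) ∂ν) < ⊤

/-- ν-random narrow convergence of a sequence of fibered measures. -/
def TendstoRandomNarrowly {X Y : Type*} [TopologicalSpace X] [MeasurableSpace X]
    [MeasurableSpace Y] (ν : Measure Y) (μs : ℕ → Measure (X × Y)) (μ : Measure (X × Y)) :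
    Prop :=
  ∀ φ : X → Y → ℝ, NuRandomCont ν φ →
    Tendsto (fun n => ∫ p, φ p.1 p.2 ∂(μs n)) atTop (𝓝 (∫ p, φ p.1 p.2 ∂μ))

end FGF
namespace FGF

/-- Gradient with respect to the first (`x`) variable only. -/
def gradx {d : ℕ} (φ : Rd d × Rd d → ℝ) (p : Rd d × Rd d) : Rd d :=
  gradient (fun x => φ (x, p.2)) p.1

/-- Smooth compactly supported test functions. -/
def IsTest {d : ℕ} (φ : Rd d × Rd d → ℝ) : Prop := ContDiff ℝ (⊤ : ℕ∞) φ ∧ HasCompactSupport φ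

/-- Membership in the tangent space `Tan_μ P_{2,ν}`: the `L²_μ`-closure of gradients (in `x`)
of smooth compactly supported functions. -/
def MemTangent {d : ℕ} (μ : Measure (Rd d × Rd d)) (u : Rd d × Rd d → Rd d) : Prop :=
  MemLp u 2 μ ∧ ∀ ε : ℝ, 0 < ε → ∃ φ : Rd d × Rd d → ℝ, IsTest φ ∧
    eLpNorm (fun p => u p - gradx φ p) 2 μ ≤ ENNReal.ofReal ε

/-- The continuity equation `∂ₜ μ + div_x (u μ) = 0` on `(a,b)` in the sense of distributions. -/
def ContinuityEqOn {d : ℕ} (μ : ℝ → Measure (Rd d × Rd d)) (u : ℝ → Rd d × Rd d → Rd d)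
    (a b : ℝ) : Prop :=
  ∀ φ : ℝ × (Rd d × Rd d) → ℝ, ContDiff ℝ (⊤ : ℕ∞) φ → HasCompactSupport φ →
    (∀ t, t ∉ Set.Ioo a b → ∀ p, φ (t, p) = 0) →
    (∫ t in Set.Ioo a b,
      ∫ p, (deriv (fun s => φ (s, p)) t + ⟪gradx (fun q => φ (t, q)) p, u t p⟫) ∂(μ t)) = 0

/-- `p`-absolutely continuous curves on `(a,b)` with respect to `W_{2,ν}`. -/
def ACpOn {d : ℕ} (ν : Measure (Rd d)) (p : ℝ≥0∞) (μ : ℝ → Measure (Rd d × Rd d))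
    (a b : ℝ) : Prop :=
  ∃ δ : ℝ → ℝ, MemLp δ p (volume.restrict (Set.Ioo a b)) ∧
    ∀ s t : ℝ, a < s → s ≤ t → t < b → W2nu ν (μ s) (μ t) ≤ ∫ τ in s..t, δ τ

/-- Metric derivative of a curve with respect to `W_{2,ν}`. -/
def mderiv {d : ℕ} (ν : Measure (Rd d)) (μ : ℝ → Measure (Rd d × Rd d)) (t : ℝ) : ℝ :=
  limUnder (𝓝[≠] t) fun s => W2nu ν (μ s) (μ t) / |s - t|

/-- The pairing `∫ ⟪u(x,ω), x' - x⟫ dγ`. -/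
def pairing {d : ℕ} (u : Rd d × Rd d → Rd d)
    (γ : Measure ((Rd d × Rd d) × (Rd d × Rd d))) : ℝ :=
  ∫ p, ⟪u p.1, p.2.1 - p.1.1⟫ ∂γ

/-- `inf_{γ ∈ Γ_{o,ν}(μ,σ)} ∫ ⟪u(x,ω), x' - x⟫ dγ`. -/
def infPairing {d : ℕ} (ν : Measure (Rd d)) (μ σ : Measure (Rd d × Rd d))
    (u : Rd d × Rd d → Rd d) : ℝ :=
  sInf {r | ∃ γ, IsOptimalAdmissiblePlan ν μ σ γ ∧ r = pairing u γ}

/-- Fibered Fréchet subdifferential: `u ∈ ∂_{W_{2,ν}} E[μ]`. -/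
def MemSubdiff {d : ℕ} (ν : Measure (Rd d)) (E : Measure (Rd d × Rd d) → EReal)
    (μ : Measure (Rd d × Rd d)) (u : Rd d × Rd d → Rd d) : Prop :=
  MemLp u 2 μ ∧
    ∀ ε : ℝ, 0 < ε → ∃ δ : ℝ, 0 < δ ∧ ∀ σ, MemP2nu ν σ → E σ ≠ ⊤ → W2nu ν μ σ ≤ δ →
      E μ + ((infPairing ν μ σ u - ε * W2nu ν μ σ : ℝ) : EReal) ≤ E σ

/-- The filter of measures `σ ∈ P_{2,ν}` converging to `μ` in `W_{2,ν}` (with `σ ≠ μ`). -/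
def slopeFilter {d : ℕ} (ν : Measure (Rd d)) (μ : Measure (Rd d × Rd d)) :
    Filter (Measure (Rd d × Rd d)) :=
  ⨅ (δ : ℝ) (_ : 0 < δ), 𝓟 {σ | MemP2nu ν σ ∧ σ ≠ μ ∧ W2nu ν μ σ ≤ δ}

/-- Metric (local) slope `|∂E|_{W_{2,ν}}[μ] = limsup_{σ→μ} (E[μ]-E[σ])⁺ / W_{2,ν}(μ,σ)`. -/
def metricSlope {d : ℕ} (ν : Measure (Rd d)) (E : Measure (Rd d × Rd d) → EReal)
    (μ : Measure (Rd d × Rd d)) : ℝ≥0∞ :=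
  limsup (fun σ => ENNReal.ofReal ((E μ - E σ).toReal / W2nu ν μ σ)) (slopeFilter ν μ)

/-- The geodesic interpolation associated with an admissible plan `γ`. -/
def geodesicInterp {d : ℕ} (γ : Measure ((Rd d × Rd d) × (Rd d × Rd d))) (θ : ℝ) :
    Measure (Rd d × Rd d) :=
  γ.map fun p => ((1 - θ) • p.1.1 + θ • p.2.1, p.1.2)

/-- `E` is λ-convex along the geodesic from `μ` to `σ` induced by the plan `γ`. -/
def ConvexAlongPlan {d : ℕ} (ν : Measure (Rd d)) (E : Measure (Rd d × Rd d) → EReal)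
    (lam : ℝ) (μ σ : Measure (Rd d × Rd d)) (γ : Measure ((Rd d × Rd d) × (Rd d × Rd d))) :
    Prop :=
  ∀ θ ∈ Set.Icc (0:ℝ) 1,
    E (geodesicInterp γ θ) ≤
      (((1 - θ) * (E μ).toReal + θ * (E σ).toReal
        - (lam / 2) * θ * (1 - θ) * (W2nu ν μ σ) ^ 2 : ℝ) : EReal)

/-- `E` is λ-geodesically convex with respect to `W_{2,ν}`. -/
def GeodesicallyConvex {d : ℕ} (ν : Measure (Rd d)) (E : Measure (Rd d × Rd d) → EReal)
    (lam : ℝ) : Prop :=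
  ∀ μ₀ μ₁, MemP2nu ν μ₀ → MemP2nu ν μ₁ → E μ₀ ≠ ⊤ → E μ₁ ≠ ⊤ →
    ∃ γ, IsOptimalAdmissiblePlan ν μ₀ μ₁ γ ∧ ConvexAlongPlan ν E lam μ₀ μ₁ γ

/-- ν-admissible 3-plans with optimal `(μ_*,μ₀)`- and `(μ_*,μ₁)`-marginals. -/
def IsGenGeodesicPlan {d : ℕ} (ν : Measure (Rd d)) (μs μ0 μ1 : Measure (Rd d × Rd d))
    (γ : Measure ((Rd d × Rd d) × (Rd d × Rd d) × (Rd d × Rd d))) : Prop :=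
  γ.map (fun p => p.1) = μs ∧ γ.map (fun p => p.2.1) = μ0 ∧ γ.map (fun p => p.2.2) = μ1 ∧
    γ {p | p.1.2 = p.2.1.2 ∧ p.1.2 = p.2.2.2}ᶜ = 0 ∧
    IsOptimalAdmissiblePlan ν μs μ0 (γ.map fun p => (p.1, p.2.1)) ∧
    IsOptimalAdmissiblePlan ν μs μ1 (γ.map fun p => (p.1, p.2.2))

/-- Generalized geodesic induced by a 3-plan. -/
def genGeodesic {d : ℕ} (γ : Measure ((Rd d × Rd d) × (Rd d × Rd d) × (Rd d × Rd d)))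
    (θ : ℝ) : Measure (Rd d × Rd d) :=
  γ.map fun p => ((1 - θ) • p.2.1.1 + θ • p.2.2.1, p.2.1.2)

/-- `W_γ² = ∫ |x₀ - x₁|² dγ`. -/
def Wgamma2 {d : ℕ} (γ : Measure ((Rd d × Rd d) × (Rd d × Rd d) × (Rd d × Rd d))) : ℝ≥0∞ :=
  ∫⁻ p, (‖p.2.1.1 - p.2.2.1‖₊ : ℝ≥0∞) ^ 2 ∂γ

/-- λ-convexity along generalized geodesics. -/
def ConvexAlongGenGeodesics {d : ℕ} (ν : Measure (Rd d)) (E : Measure (Rd d × Rd d) → EReal)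
    (lam : ℝ) : Prop :=
  ∀ μs μ0 μ1, MemP2nu ν μs → MemP2nu ν μ0 → MemP2nu ν μ1 →
    E μs ≠ ⊤ → E μ0 ≠ ⊤ → E μ1 ≠ ⊤ →
    ∃ γ, IsGenGeodesicPlan ν μs μ0 μ1 γ ∧ ∀ θ ∈ Set.Icc (0:ℝ) 1,
      E (genGeodesic γ θ) ≤
        (((1 - θ) * (E μ0).toReal + θ * (E μ1).toReal
          - (lam / 2) * θ * (1 - θ) * (Wgamma2 γ).toReal : ℝ) : EReal)

/-- Framework 𝓕: proper, coercive, lower semicontinuous, λ-convex along generalized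
geodesics (and never `-∞` on `P_{2,ν}`). -/
def FrameworkF {d : ℕ} (ν : Measure (Rd d)) (E : Measure (Rd d × Rd d) → EReal)
    (lam : ℝ) : Prop :=
  (∀ μ, MemP2nu ν μ → E μ ≠ ⊥) ∧
  (∃ μ, MemP2nu ν μ ∧ E μ ≠ ⊤) ∧
  (∃ σ, MemP2nu ν σ ∧ ∃ r : ℝ, 0 < r ∧ ∃ m : ℝ, ∀ μ, MemP2nu ν μ →
      W2nu ν σ μ ≤ r → (m : EReal) ≤ E μ) ∧
  (∀ μ, MemP2nu ν μ → ∀ μs : ℕ → Measure (Rd d × Rd d), (∀ n, MemP2nu ν (μs n)) →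
      Tendsto (fun n => W2nu ν (μs n) μ) atTop (𝓝 0) →
      E μ ≤ liminf (fun n => E (μs n)) atTop) ∧
  ConvexAlongGenGeodesics ν E lam

/-- Lebesgue measure restricted to `(a,b)`. -/
def restrIoo (a b : ℝ) : Measure ℝ := volume.restrict (Set.Ioo a b)

/-- `u` is the tangent velocity field of the curve `μ` on `(a,b)`. -/
def TangentFieldOn {d : ℕ} (ν : Measure (Rd d)) (μ : ℝ → Measure (Rd d × Rd d))
    (u : ℝ → Rd d × Rd d → Rd d) (a b : ℝ) : Prop :=
  ContinuityEqOn μ u a b ∧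
    ∀ᵐ t ∂(restrIoo a b), MemTangent (μ t) (u t) ∧
      eLpNorm (u t) 2 (μ t) ≤ ENNReal.ofReal (mderiv ν μ t)

/-- Curve of maximal slope on `(a,b)`. -/
def MaximalSlopeCurveOn {d : ℕ} (ν : Measure (Rd d)) (E : Measure (Rd d × Rd d) → EReal)
    (a b : ℝ) (μ : ℝ → Measure (Rd d × Rd d)) : Prop :=
  ∃ Efun : ℝ → ℝ, AntitoneOn Efun (Set.Ioo a b) ∧
    (∀ᵐ t ∂(restrIoo a b), (Efun t : EReal) = E (μ t)) ∧
    ∀ᵐ t ∂(restrIoo a b), DifferentiableAt ℝ Efun t ∧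
      ENNReal.ofReal (mderiv ν μ t) ^ 2 / 2 + metricSlope ν E (μ t) ^ 2 / 2
        ≤ ENNReal.ofReal (-(deriv Efun t))

/-- Gradient flow on `(a,b)`: the tangent velocity field belongs to `-∂_{W_{2,ν}} E[μ_t]`. -/
def GradientFlowOn {d : ℕ} (ν : Measure (Rd d)) (E : Measure (Rd d × Rd d) → EReal)
    (a b : ℝ) (μ : ℝ → Measure (Rd d × Rd d)) : Prop :=
  ∃ u : ℝ → Rd d × Rd d → Rd d, TangentFieldOn ν μ u a b ∧
    ∀ᵐ t ∂(restrIoo a b), MemSubdiff ν E (μ t) fun p => -(u t p)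

/-- Solution of the Evolution Variational Inequality with parameter `λ` on `(a,b)`. -/
def EVIOn {d : ℕ} (ν : Measure (Rd d)) (E : Measure (Rd d × Rd d) → EReal) (lam : ℝ)
    (a b : ℝ) (μ : ℝ → Measure (Rd d × Rd d)) : Prop :=
  ∀ σ, MemP2nu ν σ → E σ ≠ ⊤ →
    ∀ᵐ t ∂(restrIoo a b), ∃ D : ℝ,
      HasDerivAt (fun s => (W2nu ν (μ s) σ) ^ 2) D t ∧
      ((D / 2 + (lam / 2) * (W2nu ν (μ t) σ) ^ 2 : ℝ) : EReal) ≤ E σ - E (μ t)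

/-- A (locally `AC²`) gradient flow on `(0,∞)`. -/
def IsGradientFlow {d : ℕ} (ν : Measure (Rd d)) (E : Measure (Rd d × Rd d) → EReal)
    (μ : ℝ → Measure (Rd d × Rd d)) : Prop :=
  (∀ t : ℝ, 0 < t → MemP2nu ν (μ t)) ∧
  (∀ a b : ℝ, 0 < a → a < b → ACpOn ν 2 μ a b) ∧
  (∀ a b : ℝ, 0 < a → a < b → GradientFlowOn ν E a b μ)

end FGF
namespace FGF

/-- Transport cost with scaled cost `|x-x'|² + ε²|ω-ω'|²`. -/
def WcSq {d : ℕ} (ε : ℝ) (μ₁ μ₂ : Measure (Rd d × Rd d)) : ℝ≥0∞ :=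
  ⨅ (γ : Measure ((Rd d × Rd d) × (Rd d × Rd d))) (_ : IsCoupling γ μ₁ μ₂),
    ∫⁻ p, ((‖p.1.1 - p.2.1‖₊ : ℝ≥0∞) ^ 2
      + ENNReal.ofReal (ε ^ 2) * (‖p.1.2 - p.2.2‖₊ : ℝ≥0∞) ^ 2) ∂γ

/-- Transport distance `W_{c_ε}`. -/
def Wc {d : ℕ} (ε : ℝ) (μ₁ μ₂ : Measure (Rd d × Rd d)) : ℝ :=
  Real.sqrt (WcSq ε μ₁ μ₂).toReal

/-- Squared adapted Wasserstein distance `AW₂²`. -/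
def AW2sq {d : ℕ} (μ₁ μ₂ : Measure (Rd d × Rd d)) : ℝ≥0∞ :=
  ⨅ (η : Measure (Rd d × Rd d)) (_ : IsCoupling η (μ₁.map Prod.snd) (μ₂.map Prod.snd)),
    ∫⁻ q, (W2sq (fiber μ₁ q.1) (fiber μ₂ q.2) + (‖q.1 - q.2‖₊ : ℝ≥0∞) ^ 2) ∂η

/-- Adapted Wasserstein distance `AW₂`. -/
def AW2 {d : ℕ} (μ₁ μ₂ : Measure (Rd d × Rd d)) : ℝ :=
  Real.sqrt (AW2sq μ₁ μ₂).toReal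

/-- The lifting `L_{ν̂,1}(μ₁)(x,ω,ω') = μ₁^ω(x) ⊗ ν̂(ω,ω')`. -/
def lift1 {d : ℕ} (μ₁ : Measure (Rd d × Rd d)) (νhat : Measure (Rd d × Rd d)) :
    Measure (Rd d × (Rd d × Rd d)) :=
  νhat.bind fun q => (fiber μ₁ q.1).map fun x => (x, q)

/-- The lifting `L_{ν̂,2}(μ₂)(x,ω,ω') = μ₂^{ω'}(x) ⊗ ν̂(ω,ω')`. -/
def lift2 {d : ℕ} (μ₂ : Measure (Rd d × Rd d)) (νhat : Measure (Rd d × Rd d)) :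
    Measure (Rd d × (Rd d × Rd d)) :=
  νhat.bind fun q => (fiber μ₂ q.2).map fun x => (x, q)

/-- Reorganization `((x,ω),(x',ω')) ↦ ((x,x'),(ω,ω'))` (an involution). -/
def reorg {d : ℕ} : (Rd d × Rd d) × (Rd d × Rd d) → (Rd d × Rd d) × (Rd d × Rd d) :=
  fun p => ((p.1.1, p.2.1), (p.1.2, p.2.2))

/-- Positive part of an extended real, as an `ℝ≥0∞`. -/
def erealPos (x : EReal) : ℝ≥0∞ := if x = ⊤ then ⊤ else ENNReal.ofReal x.toReal

/-- The fibered energy `E[μ] = ∫ 𝓔(ω; μ^ω) dν(ω)` (defined via positive and negative parts). -/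
def fiberedEnergy {d : ℕ} (ν : Measure (Rd d)) (EE : Rd d → Measure (Rd d) → EReal)
    (μ : Measure (Rd d × Rd d)) : EReal :=
  ((∫⁻ ω, erealPos (EE ω (fiber μ ω)) ∂ν : ℝ≥0∞) : EReal)
    - ((∫⁻ ω, erealPos (-(EE ω (fiber μ ω))) ∂ν : ℝ≥0∞) : EReal)

/-- Classical generalized-geodesic 3-plans in `P₂(ℝ^d)`: a 3-plan whose `(x_*,x₀)`- and
`(x_*,x₁)`-marginals are `W₂`-optimal couplings. -/
def IsClassicalGenGeodesicPlan {X : Type*} [MeasurableSpace X] [NormedAddCommGroup X]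
    (σs σ0 σ1 : Measure X) (γ : Measure (X × X × X)) : Prop :=
  γ.map (fun p => p.1) = σs ∧ γ.map (fun p => p.2.1) = σ0 ∧ γ.map (fun p => p.2.2) = σ1 ∧
    IsOptimalCoupling (γ.map fun p => (p.1, p.2.1)) σs σ0 ∧
    IsOptimalCoupling (γ.map fun p => (p.1, p.2.2)) σs σ1

/-- Classical generalized geodesic in `P₂(ℝ^d)` induced by a 3-plan. -/
def classicalGenGeodesic {d : ℕ} (γ : Measure (Rd d × Rd d × Rd d)) (θ : ℝ) :
    Measure (Rd d) :=
  γ.map fun p => (1 - θ) • p.2.1 + θ • p.2.2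

/-- `∇W(x) = |x|^{-α} x / (1-α)`, the gradient of the weakly singular potential
`W(x) = |x|^{2-α} / ((2-α)(1-α))`. -/
def gradW (d : ℕ) (α : ℝ) (x : Rd d) : Rd d := (‖x‖ ^ (-α) / (1 - α)) • x

/-- The Kuramoto-type velocity field `u[μ](x,ω) = ω - K ∫ ∇W(x - x') dμ(x',ω')`. -/
def velocity {d : ℕ} (α K : ℝ) (μ : Measure (Rd d × Rd d)) (x ω : Rd d) : Rd d :=
  ω - K • ∫ p, gradW d α (x - p.1) ∂μ

/-- Topological support of a measure. -/
def msupport {X : Type*} [TopologicalSpace X] [MeasurableSpace X] (μ : Measure X) :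
    Set X := {p | ∀ U : Set X, IsOpen U → p ∈ U → 0 < μ U}

/-- Weak measure-valued solutions of the Kuramoto-type equation
`∂ₜ μ + div_x (u[μ] μ) = 0` issued at `μ₀`. -/
def IsWeakSolution {d : ℕ} (α K : ℝ) (μ₀ : Measure (Rd d × Rd d))
    (μ : ℝ → Measure (Rd d × Rd d)) : Prop :=
  μ 0 = μ₀ ∧
  (∀ t : ℝ, 0 ≤ t → IsProbabilityMeasure (μ t) ∧ (μ t).map Prod.snd = μ₀.map Prod.snd ∧
    (∫⁻ p, (‖p.1‖₊ : ℝ≥0∞) ^ 2 ∂(μ t)) < ⊤) ∧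
  (∀ a b : ℝ, 0 < a → a < b → ∃ δ : ℝ → ℝ, IntegrableOn δ (Set.Ioo a b) ∧
    ∀ s t : ℝ, a < s → s ≤ t → t < b →
      W2nu (μ₀.map Prod.snd) (μ s) (μ t) ≤ ∫ τ in s..t, δ τ) ∧
  (∀ b : ℝ, 0 < b →
    (∫⁻ t in Set.Ioo 0 b, eLpNorm (fun p => velocity α K (μ t) p.1 p.2) 2 (μ t)) < ⊤) ∧
  (∀ φ : ℝ × (Rd d × Rd d) → ℝ, ContDiff ℝ (⊤ : ℕ∞) φ → HasCompactSupport φ →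
    (∫ t in Set.Ioi (0:ℝ), ∫ p, (deriv (fun s => φ (s, p)) t
        + ⟪gradient (fun x => φ (t, (x, p.2))) p.1, velocity α K (μ t) p.1 p.2⟫) ∂(μ t))
      = - ∫ p, φ (0, p) ∂μ₀)

/-- The uniform bound `D₀` on spatial diameters for two initial data. -/
def D0 {d : ℕ} (α K : ℝ) (μ₀₁ μ₀₂ : Measure (Rd d × Rd d)) : ℝ :=
  max (max (Metric.diam (Prod.fst '' msupport μ₀₁)) (Metric.diam (Prod.fst '' msupport μ₀₂)))
      (max ((Metric.diam (Prod.snd '' msupport μ₀₁) / K) ^ (1 / (1 - α)))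
           ((Metric.diam (Prod.snd '' msupport μ₀₂) / K) ^ (1 / (1 - α))))

/-- The uniform bound `D₀` on spatial diameters for a single initial datum. -/
def D0single {d : ℕ} (α K : ℝ) (μ₀ : Measure (Rd d × Rd d)) : ℝ :=
  max (Metric.diam (Prod.fst '' msupport μ₀))
      ((Metric.diam (Prod.snd '' msupport μ₀) / K) ^ (1 / (1 - α)))

end FGF

namespace FGF
set_option linter.dupNamespace false
set_option maxHeartbeats 1000000
open ProbabilityTheory
open scoped InnerProductSpace

section Infra

variable {Y Z : Type*} [MeasurableSpace Y] [MeasurableSpace Z]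

lemma isProbabilityMeasure_of_map_fst {γ : Measure (Y × Z)} {μ₁ : Measure Y}
    [IsProbabilityMeasure μ₁] (h : γ.map Prod.fst = μ₁) : IsProbabilityMeasure γ := by
  constructor
  have h2 := congrArg (fun m : Measure Y => m Set.univ) h
  simp only [Measure.map_apply measurable_fst MeasurableSet.univ, Set.preimage_univ] at h2
  rw [h2]; exact measure_univ

variable [StandardBorelSpace Y] [Nonempty Y]

lemma fiber_def (μ : Measure (Y × Z)) [h : IsFiniteMeasure μ] :
    fiber μ = fun z => (μ.map Prod.swap).condKernel z := by
  funext z; unfold fiber; rw [dif_pos h]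

instance isProbabilityMeasure_fiber (μ : Measure (Y × Z)) [IsFiniteMeasure μ] (z : Z) :
    IsProbabilityMeasure (fiber μ z) := by
  rw [fiber_def]; infer_instance

lemma compProd_fst_condKernel' {Ω : Type*} [MeasurableSpace Ω] [StandardBorelSpace Ω]
    [Nonempty Ω] (ρ : Measure (Z × Ω)) [IsFiniteMeasure ρ] :
    ρ.fst ⊗ₘ ρ.condKernel = ρ :=
  Measure.disintegrate ρ ρ.condKernel

lemma compProd_fiber (μ : Measure (Y × Z)) [IsFiniteMeasure μ] :
    (μ.map Prod.snd) ⊗ₘ (μ.map Prod.swap).condKernel = μ.map Prod.swap := by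
  have h1 : (μ.map Prod.swap).fst = μ.map Prod.snd := by
    rw [Measure.fst, Measure.map_map measurable_fst measurable_swap]; rfl
  rw [← h1, compProd_fst_condKernel']

lemma lintegral_fiber (μ : Measure (Y × Z)) [IsFiniteMeasure μ] {f : Y → ℝ≥0∞}
    (hf : Measurable f) :
    ∫⁻ z, ∫⁻ y, f y ∂(fiber μ z) ∂(μ.map Prod.snd) = ∫⁻ p, f p.1 ∂μ := by
  rw [fiber_def]
  calc ∫⁻ z, ∫⁻ y, f y ∂(μ.map Prod.swap).condKernel z ∂(μ.map Prod.snd)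
      = ∫⁻ q : Z × Y, f q.2 ∂((μ.map Prod.snd) ⊗ₘ (μ.map Prod.swap).condKernel) :=
        (Measure.lintegral_compProd (hf.comp measurable_snd)).symm
    _ = ∫⁻ q : Z × Y, f q.2 ∂(μ.map Prod.swap) := by rw [compProd_fiber]
    _ = ∫⁻ p, f p.1 ∂μ :=
        lintegral_map (f := fun q : Z × Y => f q.2) (g := Prod.swap) (hf.comp measurable_snd)
          measurable_swap

end Infra

section W2Bounds

lemma sq_add_le_ennreal {x y z : ℝ≥0∞} (h : z ≤ x + y) : z^2 ≤ 4*x^2 + 4*y^2 := by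
  have h2 : z^2 ≤ (x+y)^2 := pow_le_pow_left' h 2
  refine h2.trans ?_
  rcases le_total x y with hxy | hxy
  · calc (x+y)^2 ≤ (y+y)^2 := pow_le_pow_left' (by gcongr) 2
      _ = 4*y^2 := by ring
      _ ≤ 4*x^2 + 4*y^2 := le_add_self
  · calc (x+y)^2 ≤ (x+x)^2 := pow_le_pow_left' (by gcongr) 2
      _ = 4*x^2 := by ring
      _ ≤ 4*x^2 + 4*y^2 := le_self_add

lemma ennnorm_sub_sq_le {E : Type*} [NormedAddCommGroup E] (a b : E) :
    (‖a - b‖₊ : ℝ≥0∞)^2 ≤ 4*(‖a‖₊:ℝ≥0∞)^2 + 4*(‖b‖₊:ℝ≥0∞)^2 := by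
  refine sq_add_le_ennreal ?_
  rw [← ENNReal.coe_add]
  exact_mod_cast nnnorm_sub_le a b

lemma W2sq_le_cost {E : Type*} [MeasurableSpace E] [NormedAddCommGroup E] {a b : Measure E}
    {q : Measure (E × E)} (h : IsCoupling q a b) :
    W2sq a b ≤ ∫⁻ p, (‖p.1 - p.2‖₊ : ℝ≥0∞) ^ 2 ∂q :=
  iInf₂_le q h

lemma measurable_costfn {E : Type*} [MeasurableSpace E] [NormedAddCommGroup E] [BorelSpace E]
    [SecondCountableTopology E] :
    Measurable (fun q : E × E => (‖q.1 - q.2‖₊ : ℝ≥0∞)^2) :=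
  ((measurable_fst.sub measurable_snd).nnnorm.coe_nnreal_ennreal).pow_const 2

lemma measurable_normsq {E : Type*} [MeasurableSpace E] [NormedAddCommGroup E] [BorelSpace E] :
    Measurable (fun x : E => (‖x‖₊ : ℝ≥0∞)^2) :=
  (measurable_nnnorm.coe_nnreal_ennreal).pow_const 2

lemma W2sq_le_moments {d : ℕ} (a b : Measure (Rd d)) [IsProbabilityMeasure a]
    [IsProbabilityMeasure b] :
    W2sq a b ≤ 4 * (∫⁻ x, (‖x‖₊:ℝ≥0∞)^2 ∂a) + 4 * (∫⁻ x, (‖x‖₊:ℝ≥0∞)^2 ∂b) := by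
  have hcpl : IsCoupling (a.prod b) a b :=
    ⟨Measure.fst_prod (μ := a) (ν := b), Measure.snd_prod (μ := a) (ν := b)⟩
  refine (W2sq_le_cost hcpl).trans ?_
  have h1 : ∫⁻ p : Rd d × Rd d, (‖p.1 - p.2‖₊:ℝ≥0∞)^2 ∂(a.prod b)
      ≤ ∫⁻ p : Rd d × Rd d, (4*(‖p.1‖₊:ℝ≥0∞)^2 + 4*(‖p.2‖₊:ℝ≥0∞)^2) ∂(a.prod b) :=
    lintegral_mono fun p => ennnorm_sub_sq_le _ _
  refine h1.trans (le_of_eq ?_)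
  have hmf : Measurable (fun p : Rd d × Rd d => (‖p.1‖₊:ℝ≥0∞)^2) :=
    measurable_normsq.comp measurable_fst
  have hms : Measurable (fun p : Rd d × Rd d => (‖p.2‖₊:ℝ≥0∞)^2) :=
    measurable_normsq.comp measurable_snd
  rw [lintegral_add_left (hmf.const_mul 4), lintegral_const_mul 4 hmf,
      lintegral_const_mul 4 hms]
  congr 1
  · congr 1
    have : ∫⁻ x, (‖x‖₊:ℝ≥0∞)^2 ∂((a.prod b).map Prod.fst)
        = ∫⁻ p : Rd d × Rd d, (‖p.1‖₊:ℝ≥0∞)^2 ∂(a.prod b) :=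
      lintegral_map measurable_normsq measurable_fst
    rw [← this]
    congr 1
    exact (Measure.fst_prod (μ := a) (ν := b))
  · congr 1
    have : ∫⁻ x, (‖x‖₊:ℝ≥0∞)^2 ∂((a.prod b).map Prod.snd)
        = ∫⁻ p : Rd d × Rd d, (‖p.2‖₊:ℝ≥0∞)^2 ∂(a.prod b) :=
      lintegral_map measurable_normsq measurable_snd
    rw [← this]
    congr 1
    exact (Measure.snd_prod (μ := a) (ν := b))

lemma measurable_fiber_moment {d : ℕ} (μ : Measure (Rd d × Rd d)) [IsFiniteMeasure μ] :
    Measurable (fun ω => ∫⁻ x, (‖x‖₊:ℝ≥0∞)^2 ∂(fiber μ ω)) := by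
  rw [fiber_def]
  exact Measurable.lintegral_kernel measurable_normsq

lemma W2nuSq_lt_top {d : ℕ} {ν : Measure (Rd d)} {μ₁ μ₂ : Measure (Rd d × Rd d)}
    (h₁ : MemP2nu ν μ₁) (h₂ : MemP2nu ν μ₂) : W2nuSq ν μ₁ μ₂ < ⊤ := by
  obtain ⟨hp1, hν1, hm1⟩ := h₁; obtain ⟨hp2, hν2, hm2⟩ := h₂
  haveI := hp1; haveI := hp2
  have key : W2nuSq ν μ₁ μ₂
      ≤ ∫⁻ ω, (4 * ∫⁻ x, (‖x‖₊:ℝ≥0∞)^2 ∂(fiber μ₁ ω)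
          + 4 * ∫⁻ x, (‖x‖₊:ℝ≥0∞)^2 ∂(fiber μ₂ ω)) ∂ν :=
    lintegral_mono fun ω => W2sq_le_moments _ _
  have hsplit : ∫⁻ ω, (4 * ∫⁻ x, (‖x‖₊:ℝ≥0∞)^2 ∂(fiber μ₁ ω)
          + 4 * ∫⁻ x, (‖x‖₊:ℝ≥0∞)^2 ∂(fiber μ₂ ω)) ∂ν
      = 4 * ∫⁻ ω, (∫⁻ x, (‖x‖₊:ℝ≥0∞)^2 ∂(fiber μ₁ ω)) ∂ν
        + 4 * ∫⁻ ω, (∫⁻ x, (‖x‖₊:ℝ≥0∞)^2 ∂(fiber μ₂ ω)) ∂ν := by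
    rw [lintegral_add_left ((measurable_fiber_moment μ₁).const_mul 4),
        lintegral_const_mul 4 (measurable_fiber_moment μ₁),
        lintegral_const_mul 4 (measurable_fiber_moment μ₂)]
  have hf1 : ∫⁻ ω, (∫⁻ x, (‖x‖₊:ℝ≥0∞)^2 ∂(fiber μ₁ ω)) ∂ν = ∫⁻ p, (‖p.1‖₊:ℝ≥0∞)^2 ∂μ₁ := by
    rw [← hν1]; exact lintegral_fiber μ₁ measurable_normsq
  have hf2 : ∫⁻ ω, (∫⁻ x, (‖x‖₊:ℝ≥0∞)^2 ∂(fiber μ₂ ω)) ∂ν = ∫⁻ p, (‖p.1‖₊:ℝ≥0∞)^2 ∂μ₂ := by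
    rw [← hν2]; exact lintegral_fiber μ₂ measurable_normsq
  refine lt_of_le_of_lt (key.trans (le_of_eq hsplit)) ?_
  rw [hf1, hf2]
  exact ENNReal.add_lt_top.mpr ⟨ENNReal.mul_lt_top (by simp) hm1,
    ENNReal.mul_lt_top (by simp) hm2⟩

end W2Bounds

section KeyDisint

variable {d : ℕ}

lemma ae_diag_of_adm {μ₁ μ₂ : Measure (Rd d × Rd d)}
    {γ' : Measure ((Rd d × Rd d) × (Rd d × Rd d))} (hadm : IsAdmissiblePlan μ₁ μ₂ γ') :
    ∀ᵐ p ∂γ', p.1.2 = p.2.2 := by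
  rw [MeasureTheory.ae_iff]
  exact hadm.2

/-- Second marginal of the second factor of an admissible plan is also `ν`. -/
lemma adm_snd_marginal {ν : Measure (Rd d)} {μ₁ μ₂ : Measure (Rd d × Rd d)}
    {γ' : Measure ((Rd d × Rd d) × (Rd d × Rd d))} (hadm : IsAdmissiblePlan μ₁ μ₂ γ')
    (hν₁ : μ₁.map Prod.snd = ν) : μ₂.map Prod.snd = ν := by
  have hm1 := hadm.1.1
  have hm2 := hadm.1.2
  have h1 : μ₂.map Prod.snd = γ'.map (fun p => p.2.2) := by
    rw [← hm2, Measure.map_map measurable_snd measurable_snd]; rfl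
  have h2 : μ₁.map Prod.snd = γ'.map (fun p => p.1.2) := by
    rw [← hm1, Measure.map_map measurable_snd measurable_fst]; rfl
  have h3 : γ'.map (fun p : (Rd d × Rd d) × (Rd d × Rd d) => p.2.2)
      = γ'.map (fun p => p.1.2) := by
    apply Measure.map_congr
    filter_upwards [ae_diag_of_adm hadm] with p hp
    exact hp.symm
  rw [h1, h3, ← h2, hν₁]

/-- Key disintegration inequality: the fibered squared distance is bounded by the cost of
any admissible plan. -/
lemma W2nuSq_le_planCost {ν : Measure (Rd d)} {μ₁ μ₂ : Measure (Rd d × Rd d)}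
    [IsProbabilityMeasure μ₁] [IsProbabilityMeasure μ₂]
    (hν₁ : μ₁.map Prod.snd = ν)
    {γ' : Measure ((Rd d × Rd d) × (Rd d × Rd d))}
    (hadm : IsAdmissiblePlan μ₁ μ₂ γ') :
    W2nuSq ν μ₁ μ₂ ≤ planCost γ' := by
  obtain ⟨⟨hm1, hm2⟩, hdiag⟩ := hadm
  haveI : IsProbabilityMeasure γ' := isProbabilityMeasure_of_map_fst hm1
  have hν₂ : μ₂.map Prod.snd = ν := adm_snd_marginal ⟨⟨hm1, hm2⟩, hdiag⟩ hν₁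
  set F : ((Rd d × Rd d) × (Rd d × Rd d)) → (Rd d × (Rd d × Rd d)) :=
    fun p => (p.1.2, (p.1.1, p.2.1)) with hF_def
  have hF : Measurable F :=
    (measurable_fst.snd.prodMk (measurable_fst.fst.prodMk measurable_snd.fst))
  set γhat := γ'.map F with hγhat_def
  haveI : IsProbabilityMeasure γhat := Measure.isProbabilityMeasure_map hF.aemeasurable
  haveI : IsProbabilityMeasure ν := by
    rw [← hν₁]; exact Measure.isProbabilityMeasure_map measurable_snd.aemeasurable
  have hfst : γhat.fst = ν := by
    have e1 : γhat.fst = γ'.map (fun p => p.1.2) := by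
      rw [hγhat_def, Measure.fst, Measure.map_map measurable_fst hF]; rfl
    have e2 : μ₁.map Prod.snd = γ'.map (fun p => p.1.2) := by
      rw [← hm1, Measure.map_map measurable_snd measurable_fst]; rfl
    rw [e1, ← e2, hν₁]
  set κ := γhat.condKernel with hκ_def
  have hdis : ν ⊗ₘ κ = γhat := by rw [hκ_def, ← hfst, compProd_fst_condKernel']
  -- fst-projection kernel
  have huniq : ∀ (pr : (Rd d × Rd d) → Rd d), Measurable pr →
      (γhat.map (fun z => (z.1, pr z.2)) = (μ₁.map Prod.swap)
        ∨ γhat.map (fun z => (z.1, pr z.2)) = (μ₂.map Prod.swap)) →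
      ∀ᵐ ω ∂ν, True := fun _ _ _ => ae_of_all _ fun _ => trivial
  clear huniq
  -- κ.map Prod.fst is a.e. equal to fiber μ₁
  have key1 : ∀ᵐ ω ∂ν, (κ ω).map Prod.fst = fiber μ₁ ω := by
    set κ1 := κ.map (Prod.fst : Rd d × Rd d → Rd d) with hκ1_def
    haveI : IsMarkovKernel κ1 := by
      constructor; intro a
      constructor
      rw [hκ1_def, Kernel.map_apply _ measurable_fst,
        Measure.map_apply measurable_fst MeasurableSet.univ]
      simp
    have hρfst : (μ₁.map Prod.swap).fst = ν := by
      have e : (Prod.fst ∘ (Prod.swap : Rd d × Rd d → Rd d × Rd d))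
          = (Prod.snd : Rd d × Rd d → Rd d) := rfl
      rw [Measure.fst, Measure.map_map measurable_fst measurable_swap, e, hν₁]
    have hcomp1 : μ₁.map Prod.swap = ν ⊗ₘ κ1 := by
      have hmapG : γhat.map (fun z : Rd d × (Rd d × Rd d) => (z.1, z.2.1))
          = μ₁.map Prod.swap := by
        rw [hγhat_def, Measure.map_map (measurable_fst.prodMk measurable_snd.fst) hF,
          ← hm1, Measure.map_map measurable_swap measurable_fst]
        rfl
      ext s hs
      rw [Measure.compProd_apply hs, ← hmapG,
        Measure.map_apply (measurable_fst.prodMk measurable_snd.fst) hs, ← hdis,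
        Measure.compProd_apply ((measurable_fst.prodMk measurable_snd.fst) hs)]
      congr 1
      funext a
      rw [hκ1_def, Kernel.map_apply _ measurable_fst,
        Measure.map_apply measurable_fst (measurable_prodMk_left hs)]
      rfl
    have h := eq_condKernel_of_measure_eq_compProd (ρ := μ₁.map Prod.swap) κ1
      (by rw [hρfst, ← hcomp1])
    rw [hρfst] at h
    rw [fiber_def]
    filter_upwards [h] with ω hω
    rw [← hω, hκ1_def, Kernel.map_apply _ measurable_fst]
  -- snd-projection kernel
  have key2 : ∀ᵐ ω ∂ν, (κ ω).map Prod.snd = fiber μ₂ ω := by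
    set κ2 := κ.map (Prod.snd : Rd d × Rd d → Rd d) with hκ2_def
    haveI : IsMarkovKernel κ2 := by
      constructor; intro a
      constructor
      rw [hκ2_def, Kernel.map_apply _ measurable_snd,
        Measure.map_apply measurable_snd MeasurableSet.univ]
      simp
    have hρfst : (μ₂.map Prod.swap).fst = ν := by
      have e : (Prod.fst ∘ (Prod.swap : Rd d × Rd d → Rd d × Rd d))
          = (Prod.snd : Rd d × Rd d → Rd d) := rfl
      rw [Measure.fst, Measure.map_map measurable_fst measurable_swap, e, hν₂]
    have hcomp2 : μ₂.map Prod.swap = ν ⊗ₘ κ2 := by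
      have hmapG : γhat.map (fun z : Rd d × (Rd d × Rd d) => (z.1, z.2.2))
          = μ₂.map Prod.swap := by
        rw [hγhat_def, Measure.map_map (measurable_fst.prodMk measurable_snd.snd) hF]
        have e1 : ((fun z : Rd d × (Rd d × Rd d) => (z.1, z.2.2)) ∘ F)
            = fun p : (Rd d × Rd d) × (Rd d × Rd d) => (p.1.2, p.2.1) := rfl
        rw [e1, ← hm2, Measure.map_map measurable_swap measurable_snd]
        apply Measure.map_congr
        filter_upwards [ae_diag_of_adm ⟨⟨hm1, hm2⟩, hdiag⟩] with p hp
        show (p.1.2, p.2.1) = (p.2.2, p.2.1)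
        rw [hp]
      ext s hs
      rw [Measure.compProd_apply hs, ← hmapG,
        Measure.map_apply (measurable_fst.prodMk measurable_snd.snd) hs, ← hdis,
        Measure.compProd_apply ((measurable_fst.prodMk measurable_snd.snd) hs)]
      congr 1
      funext a
      rw [hκ2_def, Kernel.map_apply _ measurable_snd,
        Measure.map_apply measurable_snd (measurable_prodMk_left hs)]
      rfl
    have h := eq_condKernel_of_measure_eq_compProd (ρ := μ₂.map Prod.swap) κ2
      (by rw [hρfst, ← hcomp2])
    rw [hρfst] at h
    rw [fiber_def]
    filter_upwards [h] with ω hω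
    rw [← hω, hκ2_def, Kernel.map_apply _ measurable_snd]
  -- conclude
  have hae : ∀ᵐ ω ∂ν, W2sq (fiber μ₁ ω) (fiber μ₂ ω)
      ≤ ∫⁻ q, (‖q.1 - q.2‖₊ : ℝ≥0∞)^2 ∂(κ ω) := by
    filter_upwards [key1, key2] with ω h1 h2
    exact W2sq_le_cost ⟨h1, h2⟩
  have hint : ∫⁻ ω, (∫⁻ q, (‖q.1 - q.2‖₊ : ℝ≥0∞)^2 ∂(κ ω)) ∂ν = planCost γ' := by
    have := Measure.lintegral_compProd (μ := ν) (κ := κ)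
      (f := fun z : Rd d × (Rd d × Rd d) => (‖z.2.1 - z.2.2‖₊ : ℝ≥0∞)^2)
      (measurable_costfn.comp measurable_snd)
    rw [hdis] at this
    rw [← this, hγhat_def]
    exact lintegral_map (measurable_costfn.comp measurable_snd) hF
  calc W2nuSq ν μ₁ μ₂ ≤ ∫⁻ ω, (∫⁻ q, (‖q.1 - q.2‖₊ : ℝ≥0∞)^2 ∂(κ ω)) ∂ν :=
        lintegral_mono_ae hae
    _ = planCost γ' := hint

end KeyDisint

section Interp

variable {d : ℕ}

/-- The interpolation map. -/
def interpMap (d : ℕ) (s : ℝ) : ((Rd d × Rd d) × (Rd d × Rd d)) → (Rd d × Rd d) :=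
  fun p => ((1 - s) • p.1.1 + s • p.2.1, p.1.2)

lemma measurable_interpMap (s : ℝ) : Measurable (interpMap d s) :=
  by unfold interpMap; fun_prop

lemma geodesicInterp_eq (γ : Measure ((Rd d × Rd d) × (Rd d × Rd d))) (s : ℝ) :
    geodesicInterp γ s = γ.map (interpMap d s) := rfl

/-- The forward interpolation plan from `μ` to `geodesicInterp γ s`. -/
def fwdPlan (d : ℕ) (s : ℝ) (γ : Measure ((Rd d × Rd d) × (Rd d × Rd d))) :
    Measure ((Rd d × Rd d) × (Rd d × Rd d)) :=
  γ.map (fun p => (p.1, interpMap d s p))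

/-- The backward interpolation plan from `geodesicInterp γ s` to `σ`. -/
def bwdPlan (d : ℕ) (s : ℝ) (γ : Measure ((Rd d × Rd d) × (Rd d × Rd d))) :
    Measure ((Rd d × Rd d) × (Rd d × Rd d)) :=
  γ.map (fun p => (interpMap d s p, p.2))

lemma measurable_planCost :
    Measurable (fun p : ((Rd d × Rd d) × (Rd d × Rd d)) => (‖p.1.1 - p.2.1‖₊ : ℝ≥0∞)^2) :=
  ((measurable_fst.fst.sub measurable_snd.fst).nnnorm.coe_nnreal_ennreal).pow_const 2

lemma measurable_diagSet :
    MeasurableSet {p : ((Rd d × Rd d) × (Rd d × Rd d)) | p.1.2 = p.2.2} :=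
  measurableSet_eq_fun measurable_fst.snd measurable_snd.snd

variable {ν : Measure (Rd d)} {μ σ : Measure (Rd d × Rd d)}
  {γ : Measure ((Rd d × Rd d) × (Rd d × Rd d))}

lemma fwdPlan_adm (hadm : IsAdmissiblePlan μ σ γ) (s : ℝ) :
    IsAdmissiblePlan μ (geodesicInterp γ s) (fwdPlan d s γ) := by
  have hmf : Measurable (fun p : ((Rd d × Rd d) × (Rd d × Rd d)) => (p.1, interpMap d s p)) :=
    measurable_fst.prodMk (measurable_interpMap s)
  refine ⟨⟨?_, ?_⟩, ?_⟩
  · rw [fwdPlan, Measure.map_map measurable_fst hmf]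
    exact hadm.1.1
  · rw [fwdPlan, Measure.map_map measurable_snd hmf, geodesicInterp_eq]
    rfl
  · rw [fwdPlan, Measure.map_apply hmf measurable_diagSet.compl]
    have : (fun p : ((Rd d × Rd d) × (Rd d × Rd d)) => (p.1, interpMap d s p)) ⁻¹'
        {p : ((Rd d × Rd d) × (Rd d × Rd d)) | p.1.2 = p.2.2}ᶜ = ∅ := by
      ext p; simp [interpMap]
    rw [this]; simp

lemma bwdPlan_adm (hadm : IsAdmissiblePlan μ σ γ) (s : ℝ) :
    IsAdmissiblePlan (geodesicInterp γ s) σ (bwdPlan d s γ) := by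
  have hmf : Measurable (fun p : ((Rd d × Rd d) × (Rd d × Rd d)) => (interpMap d s p, p.2)) :=
    (measurable_interpMap s).prodMk measurable_snd
  refine ⟨⟨?_, ?_⟩, ?_⟩
  · rw [bwdPlan, Measure.map_map measurable_fst hmf, geodesicInterp_eq]
    rfl
  · rw [bwdPlan, Measure.map_map measurable_snd hmf]
    exact hadm.1.2
  · rw [bwdPlan, Measure.map_apply hmf measurable_diagSet.compl]
    have : (fun p : ((Rd d × Rd d) × (Rd d × Rd d)) => (interpMap d s p, p.2)) ⁻¹'
        {p : ((Rd d × Rd d) × (Rd d × Rd d)) | p.1.2 = p.2.2}ᶜ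
        = {p : ((Rd d × Rd d) × (Rd d × Rd d)) | p.1.2 = p.2.2}ᶜ := by
      ext p; simp [interpMap]
    rw [this]; exact hadm.2

lemma nnnorm_smul_le_of_le {c : ℝ} (hc : |c| ≤ 1) (v : Rd d) : ‖c • v‖₊ ≤ ‖v‖₊ := by
  rw [nnnorm_smul]
  have h1 : ‖c‖₊ ≤ 1 := by
    rw [← NNReal.coe_le_coe, coe_nnnorm, Real.norm_eq_abs]
    exact_mod_cast hc
  calc ‖c‖₊ * ‖v‖₊ ≤ 1 * ‖v‖₊ := mul_le_mul' h1 le_rfl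
    _ = ‖v‖₊ := one_mul _

lemma sub_interp (s : ℝ) (x y : Rd d) : x - ((1 - s) • x + s • y) = s • (x - y) := by
  module

lemma interp_sub (s : ℝ) (x y : Rd d) : ((1 - s) • x + s • y) - y = (1 - s) • (x - y) := by
  module

lemma fwdPlan_cost (s : ℝ) :
    planCost (fwdPlan d s γ) = ((‖s‖₊ : ℝ≥0∞))^2 * planCost γ := by
  have hmf : Measurable (fun p : ((Rd d × Rd d) × (Rd d × Rd d)) => (p.1, interpMap d s p)) :=
    measurable_fst.prodMk (measurable_interpMap s)
  simp only [planCost, fwdPlan]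
  rw [lintegral_map measurable_planCost hmf, ← lintegral_const_mul _ measurable_planCost]
  congr 1
  funext p
  show (‖p.1.1 - ((1 - s) • p.1.1 + s • p.2.1)‖₊ : ℝ≥0∞)^2 = _
  rw [sub_interp s p.1.1 p.2.1, nnnorm_smul]
  push_cast
  ring

lemma bwdPlan_cost (s : ℝ) :
    planCost (bwdPlan d s γ) = ((‖1 - s‖₊ : ℝ≥0∞))^2 * planCost γ := by
  have hmf : Measurable (fun p : ((Rd d × Rd d) × (Rd d × Rd d)) => (interpMap d s p, p.2)) :=
    (measurable_interpMap s).prodMk measurable_snd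
  simp only [planCost, bwdPlan]
  rw [lintegral_map measurable_planCost hmf, ← lintegral_const_mul _ measurable_planCost]
  congr 1
  funext p
  show (‖((1 - s) • p.1.1 + s • p.2.1) - p.2.1‖₊ : ℝ≥0∞)^2 = _
  rw [interp_sub s p.1.1 p.2.1, nnnorm_smul]
  push_cast
  ring

lemma memP2nu_geodesicInterp (hμ : MemP2nu ν μ) (hσ : MemP2nu ν σ)
    (hadm : IsAdmissiblePlan μ σ γ) {s : ℝ} (hs0 : 0 ≤ s) (hs1 : s ≤ 1) :
    MemP2nu ν (geodesicInterp γ s) := by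
  obtain ⟨hp1, hν1, hm1⟩ := hμ
  obtain ⟨hp2, hν2, hm2⟩ := hσ
  haveI := hp1; haveI := hp2
  haveI : IsProbabilityMeasure γ := isProbabilityMeasure_of_map_fst hadm.1.1
  refine ⟨Measure.isProbabilityMeasure_map (measurable_interpMap s).aemeasurable, ?_, ?_⟩
  · rw [geodesicInterp_eq, Measure.map_map measurable_snd (measurable_interpMap s)]
    have e : (Prod.snd ∘ interpMap d s) = (fun p : ((Rd d × Rd d) × (Rd d × Rd d)) => p.1.2) :=
      rfl
    rw [e]
    have e2 : γ.map (fun p : ((Rd d × Rd d) × (Rd d × Rd d)) => p.1.2) = μ.map Prod.snd := by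
      rw [← hadm.1.1, Measure.map_map measurable_snd measurable_fst]; rfl
    rw [e2, hν1]
  · have emap : ∫⁻ q : Rd d × Rd d, (‖q.1‖₊:ℝ≥0∞)^2 ∂(γ.map (interpMap d s))
        = ∫⁻ p, (‖(interpMap d s p).1‖₊:ℝ≥0∞)^2 ∂γ :=
      lintegral_map (f := fun q : Rd d × Rd d => (‖q.1‖₊:ℝ≥0∞)^2)
        (measurable_normsq.comp measurable_fst) (measurable_interpMap s)
    rw [geodesicInterp_eq, emap]
    have hb : ∀ p : ((Rd d × Rd d) × (Rd d × Rd d)),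
        (‖(interpMap d s p).1‖₊ : ℝ≥0∞)^2 ≤ 4*(‖p.1.1‖₊:ℝ≥0∞)^2 + 4*(‖p.2.1‖₊:ℝ≥0∞)^2 := by
      intro p
      refine sq_add_le_ennreal ?_
      have h1 : ‖(1 - s) • p.1.1 + s • p.2.1‖₊ ≤ ‖p.1.1‖₊ + ‖p.2.1‖₊ := by
        refine (nnnorm_add_le _ _).trans ?_
        exact add_le_add
          (nnnorm_smul_le_of_le (abs_le.mpr ⟨by linarith, by linarith⟩) _)
          (nnnorm_smul_le_of_le (abs_le.mpr ⟨by linarith, by linarith⟩) _)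
      exact_mod_cast h1
    have key : ∫⁻ p, (‖(interpMap d s p).1‖₊ : ℝ≥0∞)^2 ∂γ
        ≤ ∫⁻ p, (4*(‖p.1.1‖₊:ℝ≥0∞)^2 + 4*(‖p.2.1‖₊:ℝ≥0∞)^2) ∂γ := lintegral_mono hb
    have hmx : Measurable (fun p : ((Rd d × Rd d) × (Rd d × Rd d)) => (‖p.1.1‖₊:ℝ≥0∞)^2) :=
      measurable_normsq.comp measurable_fst.fst
    have hmy : Measurable (fun p : ((Rd d × Rd d) × (Rd d × Rd d)) => (‖p.2.1‖₊:ℝ≥0∞)^2) :=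
      measurable_normsq.comp measurable_snd.fst
    rw [lintegral_add_left (hmx.const_mul 4), lintegral_const_mul 4 hmx,
      lintegral_const_mul 4 hmy] at key
    have e1 : ∫⁻ q, (‖q.1‖₊:ℝ≥0∞)^2 ∂μ = ∫⁻ p, (‖p.1.1‖₊:ℝ≥0∞)^2 ∂γ := by
      rw [← hadm.1.1]
      exact lintegral_map (measurable_normsq.comp measurable_fst) measurable_fst
    have e2 : ∫⁻ q, (‖q.1‖₊:ℝ≥0∞)^2 ∂σ = ∫⁻ p, (‖p.2.1‖₊:ℝ≥0∞)^2 ∂γ := by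
      rw [← hadm.1.2]
      exact lintegral_map (measurable_normsq.comp measurable_fst) measurable_snd
    refine lt_of_le_of_lt key ?_
    rw [← e1, ← e2]
    exact ENNReal.add_lt_top.mpr ⟨ENNReal.mul_lt_top (by simp) hm1,
      ENNReal.mul_lt_top (by simp) hm2⟩

end Interp

section UniqAux

variable {A B C : Type*} [MeasurableSpace A] [MeasurableSpace B] [MeasurableSpace C]

lemma eq_dirac_of_ae_eq [MeasurableSingletonClass A] {m : Measure A}
    [IsProbabilityMeasure m] {c : A} (h : ∀ᵐ x ∂m, x = c) : m = Measure.dirac c := by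
  have h0 : m {x | ¬ (x = c)} = 0 := by rw [← MeasureTheory.ae_iff]; exact h
  ext t ht
  rw [Measure.dirac_apply' _ ht]
  by_cases hc : c ∈ t
  · rw [Set.indicator_of_mem hc]
    have hcompl : m tᶜ = 0 :=
      measure_mono_null (fun x hx => fun (hxc : x = c) => hx (by rw [hxc]; exact hc)) h0
    exact (prob_compl_eq_zero_iff ht).mp hcompl
  · rw [Set.indicator_of_notMem hc]
    exact measure_mono_null (fun x hx => fun (hxc : x = c) => hc (by rw [← hxc]; exact hx)) h0

lemma dirac_injective [MeasurableSingletonClass A] {z z' : A}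
    (h : (Measure.dirac z : Measure A) = Measure.dirac z') : z = z' := by
  by_contra hne
  have h1 : (Measure.dirac z : Measure A) {z} = 1 := by
    rw [Measure.dirac_apply' _ (measurableSet_singleton z),
      Set.indicator_of_mem (Set.mem_singleton z)]
    rfl
  have h2 : (Measure.dirac z' : Measure A) {z} = 0 := by
    rw [Measure.dirac_apply' _ (measurableSet_singleton z),
      Set.indicator_of_notMem (fun hz => hne ((Set.mem_singleton_iff.mp hz).symm))]
  rw [h, h2] at h1
  simp at h1

open ProbabilityTheory in
lemma compProd_congr_ae (ρ : Measure A) [SFinite ρ] (κ κ' : Kernel A B)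
    [IsSFiniteKernel κ] [IsSFiniteKernel κ'] (h : ∀ᵐ a ∂ρ, κ a = κ' a) :
    ρ ⊗ₘ κ = ρ ⊗ₘ κ' := by
  ext t ht
  rw [Measure.compProd_apply ht, Measure.compProd_apply ht]
  apply lintegral_congr_ae
  filter_upwards [h] with a ha
  rw [ha]

lemma map_swap_swap (m : Measure (A × B)) : (m.map Prod.swap).map Prod.swap = m := by
  rw [Measure.map_map measurable_swap measurable_swap, Prod.swap_swap_eq, Measure.map_id]

open ProbabilityTheory in
lemma map_compProd_prod_fst (ρ : Measure A) [SFinite ρ] (κ : Kernel A B) (ηk : Kernel A C)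
    [IsMarkovKernel κ] [IsMarkovKernel ηk] :
    (ρ ⊗ₘ (κ ×ₖ ηk)).map (fun q : A × (B × C) => (q.1, q.2.1)) = ρ ⊗ₘ κ := by
  have hm : Measurable (fun q : A × (B × C) => (q.1, q.2.1)) :=
    measurable_fst.prodMk measurable_snd.fst
  ext t ht
  rw [Measure.map_apply hm ht, Measure.compProd_apply (hm ht), Measure.compProd_apply ht]
  apply lintegral_congr
  intro a
  rw [Kernel.prod_apply]
  have hset : (Prod.mk a ⁻¹' ((fun q : A × (B × C) => (q.1, q.2.1)) ⁻¹' t))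
      = (Prod.mk a ⁻¹' t) ×ˢ (Set.univ : Set C) := by
    ext ⟨b, c⟩; simp
  rw [hset, Measure.prod_prod, measure_univ, mul_one]

open ProbabilityTheory in
lemma map_compProd_prod_snd (ρ : Measure A) [SFinite ρ] (κ : Kernel A B) (ηk : Kernel A C)
    [IsMarkovKernel κ] [IsMarkovKernel ηk] :
    (ρ ⊗ₘ (κ ×ₖ ηk)).map (fun q : A × (B × C) => (q.1, q.2.2)) = ρ ⊗ₘ ηk := by
  have hm : Measurable (fun q : A × (B × C) => (q.1, q.2.2)) :=
    measurable_fst.prodMk measurable_snd.snd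
  ext t ht
  rw [Measure.map_apply hm ht, Measure.compProd_apply (hm ht), Measure.compProd_apply ht]
  apply lintegral_congr
  intro a
  rw [Kernel.prod_apply]
  have hset : (Prod.mk a ⁻¹' ((fun q : A × (B × C) => (q.1, q.2.2)) ⁻¹' t))
      = (Set.univ : Set B) ×ˢ (Prod.mk a ⁻¹' t) := by
    ext ⟨b, c⟩; simp
  rw [hset, Measure.prod_prod, measure_univ, one_mul]

end UniqAux

section VecId

variable {d : ℕ}

lemma interp_norm_identity (s : ℝ) (a b : Rd d) :
    ‖(1-s) • a + s • b‖^2 = (1-s)*‖a‖^2 + s*‖b‖^2 - s*(1-s)*‖a-b‖^2 := by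
  have h1 := norm_add_sq_real ((1-s) • a) (s • b)
  have h2 := norm_sub_sq_real a b
  have h3 : ⟪(1-s) • a, s • b⟫_ℝ = (1-s) * (s * ⟪a, b⟫_ℝ) := by
    rw [real_inner_smul_left, real_inner_smul_right]
  have h4 : ‖(1-s) • a‖ = |1-s| * ‖a‖ := by rw [norm_smul, Real.norm_eq_abs]
  have h5 : ‖s • b‖ = |s| * ‖b‖ := by rw [norm_smul, Real.norm_eq_abs]
  rw [h1, h3, h4, h5, mul_pow, mul_pow, sq_abs, sq_abs]
  nlinarith [h2]

lemma ennnorm_sq_eq_ofReal {E : Type*} [NormedAddCommGroup E] (v : E) :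
    (‖v‖₊ : ℝ≥0∞)^2 = ENNReal.ofReal (‖v‖^2) := by
  rw [ENNReal.ofReal_pow (norm_nonneg v), ofReal_norm, enorm_eq_nnnorm]

lemma integrable_normsq_of_lintegral_lt {α : Type*} [MeasurableSpace α] {m : Measure α}
    {f : α → Rd d} (hf : Measurable f)
    (hfin : ∫⁻ x, (‖f x‖₊:ℝ≥0∞)^2 ∂m < ⊤) : Integrable (fun x => ‖f x‖^2) m := by
  refine ⟨((hf.norm).pow_const 2).aestronglyMeasurable, ?_⟩
  rw [hasFiniteIntegral_iff_norm]
  calc ∫⁻ x, ENNReal.ofReal ‖‖f x‖^2‖ ∂m = ∫⁻ x, (‖f x‖₊:ℝ≥0∞)^2 ∂m := by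
        apply lintegral_congr; intro x
        rw [Real.norm_eq_abs, abs_of_nonneg (sq_nonneg _), ← ennnorm_sq_eq_ofReal]
    _ < ⊤ := hfin

lemma integral_normsq_eq_toReal {α : Type*} [MeasurableSpace α] {m : Measure α}
    {f : α → Rd d} (hf : Measurable f) :
    ∫ x, ‖f x‖^2 ∂m = (∫⁻ x, (‖f x‖₊:ℝ≥0∞)^2 ∂m).toReal := by
  rw [integral_eq_lintegral_of_nonneg_ae (ae_of_all _ fun x => sq_nonneg _)
    ((hf.norm.pow_const 2).aestronglyMeasurable)]
  congr 1
  apply lintegral_congr; intro x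
  rw [ennnorm_sq_eq_ofReal]

end VecId

section FiberRigid

variable {d : ℕ}

/-- If the product of two probability measures is a.e. concentrated on the set where
`(1-s)·x + s·x' = a₁` (and the `ω`-components equal `a₂`), then the first is the pushforward
of the second under the induced affine map. -/
lemma fiber_rigid {s : ℝ} (hs0 : 0 < s) (hs1 : s < 1) (a : Rd d × Rd d)
    (p q : Measure (Rd d × Rd d)) [IsProbabilityMeasure p] [IsProbabilityMeasure q]
    (h : ∀ᵐ y ∂(p.prod q),
      ((1-s) • y.1.1 + s • y.2.1 = a.1 ∧ y.1.2 = a.2 ∧ y.2.2 = a.2)) :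
    p = q.map (fun b' : Rd d × Rd d => ((1-s)⁻¹ • (a.1 - s • b'.1), a.2)) := by
  have hs : s ≠ 0 := hs0.ne'
  have hs' : (1:ℝ) - s ≠ 0 := by linarith
  have hae : ∀ᵐ b ∂p, ∀ᵐ b' ∂q,
      ((1-s) • b.1 + s • b'.1 = a.1 ∧ b.2 = a.2 ∧ b'.2 = a.2) :=
    Measure.ae_ae_of_ae_prod h
  haveI : (ae q).NeBot := ae_neBot.mpr (IsProbabilityMeasure.ne_zero q)
  haveI : (ae p).NeBot := ae_neBot.mpr (IsProbabilityMeasure.ne_zero p)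
  -- for p-a.e. b, q is the dirac mass at the point determined by b
  have hq : ∀ᵐ b ∂p, q = Measure.dirac (s⁻¹ • (a.1 - (1-s) • b.1), a.2) := by
    filter_upwards [hae] with b hb
    refine eq_dirac_of_ae_eq ?_
    filter_upwards [hb] with b' hb'
    obtain ⟨h1, _, h3⟩ := hb'
    have : b'.1 = s⁻¹ • (a.1 - (1-s) • b.1) := by
      have : s • b'.1 = a.1 - (1-s) • b.1 := by
        rw [← h1]; abel
      rw [← this, inv_smul_smul₀ hs]
    exact Prod.ext this h3
  -- extract a base point
  obtain ⟨b₀, hb₀q, hb₀e⟩ : ∃ b₀ : Rd d × Rd d, q = Measure.dirac (s⁻¹ • (a.1 - (1-s) • b₀.1), a.2) ∧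
      (∀ᵐ b' ∂q, ((1-s) • b₀.1 + s • b'.1 = a.1 ∧ b₀.2 = a.2 ∧ b'.2 = a.2)) := by
    have := hq.and hae
    exact this.exists
  -- p-a.e. b equals (b₀.1, a.2)
  have hp : ∀ᵐ b ∂p, b = (b₀.1, a.2) := by
    filter_upwards [hq, hae] with b hbq hbe
    have hpoint : (s⁻¹ • (a.1 - (1-s) • b.1), a.2)
        = ((s⁻¹ • (a.1 - (1-s) • b₀.1), a.2) : Rd d × Rd d) :=
      dirac_injective (hbq.symm.trans hb₀q)
    have h1 : s⁻¹ • (a.1 - (1-s) • b.1) = s⁻¹ • (a.1 - (1-s) • b₀.1) :=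
      congrArg Prod.fst hpoint
    have h2 : a.1 - (1-s) • b.1 = a.1 - (1-s) • b₀.1 :=
      smul_right_injective _ (inv_ne_zero hs) h1
    have h3 : (1-s) • b.1 = (1-s) • b₀.1 := sub_right_injective h2
    have h4 : b.1 = b₀.1 := smul_right_injective _ hs' h3
    have h5 : b.2 = a.2 := by
      obtain ⟨b', hb'⟩ := hbe.exists
      exact hb'.2.1
    exact Prod.ext h4 h5
  have hpd : p = Measure.dirac (b₀.1, a.2) := eq_dirac_of_ae_eq hp
  -- compute the pushforward
  have hmΨ : Measurable (fun b' : Rd d × Rd d => ((1-s)⁻¹ • (a.1 - s • b'.1), a.2)) :=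
    ((measurable_const.sub (measurable_fst.const_smul s)).const_smul
      ((1-s)⁻¹)).prodMk measurable_const
  rw [hb₀q, Measure.map_dirac' hmΨ]
  rw [hpd]
  congr 1
  have hb1 : (1-s) • b₀.1 + s • (s⁻¹ • (a.1 - (1-s) • b₀.1)) = a.1 := by
    rw [smul_inv_smul₀ hs]; abel
  have : a.1 - s • (s⁻¹ • (a.1 - (1-s) • b₀.1)) = (1-s) • b₀.1 := by
    rw [smul_inv_smul₀ hs]; abel
  rw [this, inv_smul_smul₀ hs']

end FiberRigid

section PlanUnique

variable {d : ℕ} {ν : Measure (Rd d)} {μ σ : Measure (Rd d × Rd d)}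
  {γ lam : Measure ((Rd d × Rd d) × (Rd d × Rd d))}

instance map_swap_prob {A B : Type*} [MeasurableSpace A] [MeasurableSpace B]
    (m : Measure (A × B)) [IsProbabilityMeasure m] :
    IsProbabilityMeasure (m.map Prod.swap) :=
  Measure.isProbabilityMeasure_map measurable_swap.aemeasurable

instance bwdPlan_prob (s : ℝ) (γ : Measure ((Rd d × Rd d) × (Rd d × Rd d)))
    [IsProbabilityMeasure γ] : IsProbabilityMeasure (bwdPlan d s γ) := by
  rw [bwdPlan]
  exact Measure.isProbabilityMeasure_map ((measurable_interpMap s).prodMk measurable_snd).aemeasurable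

instance fwdPlan_prob (s : ℝ) (γ : Measure ((Rd d × Rd d) × (Rd d × Rd d)))
    [IsProbabilityMeasure γ] : IsProbabilityMeasure (fwdPlan d s γ) := by
  rw [fwdPlan]
  exact Measure.isProbabilityMeasure_map (measurable_fst.prodMk (measurable_interpMap s)).aemeasurable

lemma plan_fiber_formula [IsProbabilityMeasure μ] [IsProbabilityMeasure σ]
    [IsProbabilityMeasure γ] [IsProbabilityMeasure lam]
    (hνμ : μ.map Prod.snd = ν) (hγadm : IsAdmissiblePlan μ σ γ)
    (hKfin : planCost γ < ⊤) (hKopt : planCost γ ≤ W2nuSq ν μ σ)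
    {s : ℝ} (hs0 : 0 < s) (hs1 : s < 1)
    (hlamAdm : IsAdmissiblePlan μ (geodesicInterp γ s) lam)
    (hlamCost : planCost lam ≤ (‖s‖₊ : ℝ≥0∞)^2 * planCost γ) :
    ∀ᵐ a ∂(geodesicInterp γ s),
      (lam.map Prod.swap).condKernel a
        = ((bwdPlan d s γ).condKernel a).map
            (fun b' : Rd d × Rd d => ((1-s)⁻¹ • (a.1 - s • b'.1), a.2)) := by
  haveI hρsP : IsProbabilityMeasure (geodesicInterp γ s) := by
    rw [geodesicInterp_eq]
    exact Measure.isProbabilityMeasure_map (measurable_interpMap s).aemeasurable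
  set ρs := geodesicInterp γ s with hρs
  set lamT := lam.map Prod.swap with hlamT
  have hlamTfst : lamT.fst = ρs := by
    rw [hlamT, Measure.fst, Measure.map_map measurable_fst measurable_swap]
    exact hlamAdm.1.2
  set βs := bwdPlan d s γ with hβs
  have hβadm := bwdPlan_adm hγadm s
  have hβfst : βs.fst = ρs := hβadm.1.1
  set κ1 := lamT.condKernel with hκ1
  set κ2 := βs.condKernel with hκ2
  set η := ρs ⊗ₘ (κ1 ×ₖ κ2) with hη
  have hmq12 : Measurable
      (fun q : (Rd d × Rd d) × ((Rd d × Rd d) × (Rd d × Rd d)) => (q.1, q.2.1)) :=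
    measurable_fst.prodMk measurable_snd.fst
  have hmq13 : Measurable
      (fun q : (Rd d × Rd d) × ((Rd d × Rd d) × (Rd d × Rd d)) => (q.1, q.2.2)) :=
    measurable_fst.prodMk measurable_snd.snd
  have hm12 : η.map (fun q : (Rd d × Rd d) × ((Rd d × Rd d) × (Rd d × Rd d)) =>
      (q.1, q.2.1)) = lamT := by
    rw [hη, map_compProd_prod_fst, hκ1, ← hlamTfst, compProd_fst_condKernel']
  have hm13 : η.map (fun q : (Rd d × Rd d) × ((Rd d × Rd d) × (Rd d × Rd d)) =>
      (q.1, q.2.2)) = βs := by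
    rw [hη, map_compProd_prod_snd, hκ2, ← hβfst, compProd_fst_condKernel']
  -- cost identities
  have hrevm : Measurable (fun p : (Rd d × Rd d) × (Rd d × Rd d) =>
      (‖p.2.1 - p.1.1‖₊ : ℝ≥0∞)^2) :=
    ((measurable_snd.fst.sub measurable_fst.fst).nnnorm.coe_nnreal_ennreal).pow_const 2
  have hI1 : ∫⁻ q, (‖q.2.1.1 - q.1.1‖₊ : ℝ≥0∞)^2 ∂η = planCost lam := by
    have e1 : ∫⁻ p : (Rd d × Rd d) × (Rd d × Rd d), (‖p.2.1 - p.1.1‖₊:ℝ≥0∞)^2 ∂lamT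
        = planCost lam := by
      rw [hlamT, lintegral_map (f := fun p : (Rd d × Rd d) × (Rd d × Rd d) =>
        (‖p.2.1 - p.1.1‖₊:ℝ≥0∞)^2) hrevm measurable_swap]
      rfl
    rw [← e1, ← hm12]
    exact (lintegral_map (f := fun p : (Rd d × Rd d) × (Rd d × Rd d) =>
      (‖p.2.1 - p.1.1‖₊:ℝ≥0∞)^2) hrevm hmq12).symm
  have hI2 : ∫⁻ q, (‖q.1.1 - q.2.2.1‖₊ : ℝ≥0∞)^2 ∂η = planCost βs := by
    rw [← hm13]
    exact (lintegral_map (f := fun p : (Rd d × Rd d) × (Rd d × Rd d) =>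
      (‖p.1.1 - p.2.1‖₊:ℝ≥0∞)^2) measurable_planCost hmq13).symm
  -- the composite plan
  set piHat := η.map (fun q : (Rd d × Rd d) × ((Rd d × Rd d) × (Rd d × Rd d)) => q.2)
    with hpiHat
  have hI3 : ∫⁻ q, (‖q.2.1.1 - q.2.2.1‖₊ : ℝ≥0∞)^2 ∂η = planCost piHat := by
    rw [hpiHat]
    simp only [planCost]
    exact (lintegral_map measurable_planCost measurable_snd).symm
  -- a.e. diagonal facts
  have hTmeas : MeasurableSet {p : (Rd d × Rd d) × (Rd d × Rd d) | p.2.2 = p.1.2} :=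
    measurableSet_eq_fun measurable_snd.snd measurable_fst.snd
  have hlamTd : lamT {p : (Rd d × Rd d) × (Rd d × Rd d) | p.2.2 = p.1.2}ᶜ = 0 := by
    rw [hlamT, Measure.map_apply measurable_swap hTmeas.compl]
    exact hlamAdm.2
  have hd1 : ∀ᵐ q ∂η, q.2.1.2 = q.1.2 := by
    rw [ae_iff]
    have hset : {q : (Rd d × Rd d) × ((Rd d × Rd d) × (Rd d × Rd d)) | ¬ (q.2.1.2 = q.1.2)}
        = (fun q : (Rd d × Rd d) × ((Rd d × Rd d) × (Rd d × Rd d)) => (q.1, q.2.1)) ⁻¹'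
          {p : (Rd d × Rd d) × (Rd d × Rd d) | p.2.2 = p.1.2}ᶜ := rfl
    rw [hset, ← Measure.map_apply hmq12 hTmeas.compl, hm12]
    exact hlamTd
  have hd2 : ∀ᵐ q ∂η, q.1.2 = q.2.2.2 := by
    rw [ae_iff]
    have hset : {q : (Rd d × Rd d) × ((Rd d × Rd d) × (Rd d × Rd d)) | ¬ (q.1.2 = q.2.2.2)}
        = (fun q : (Rd d × Rd d) × ((Rd d × Rd d) × (Rd d × Rd d)) => (q.1, q.2.2)) ⁻¹'
          {p : (Rd d × Rd d) × (Rd d × Rd d) | p.1.2 = p.2.2}ᶜ := rfl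
    rw [hset, ← Measure.map_apply hmq13 measurable_diagSet.compl, hm13]
    exact hβadm.2
  -- piHat is an admissible plan between μ and σ
  have hπfst : piHat.map Prod.fst = μ := by
    have e1 : piHat.map Prod.fst = lamT.map Prod.snd := by
      rw [hpiHat, Measure.map_map measurable_fst measurable_snd, ← hm12,
        Measure.map_map measurable_snd hmq12]
      rfl
    rw [e1, hlamT, Measure.map_map measurable_snd measurable_swap]
    exact hlamAdm.1.1
  have hπsnd : piHat.map Prod.snd = σ := by
    have e1 : piHat.map Prod.snd = βs.map Prod.snd := by
      rw [hpiHat, Measure.map_map measurable_snd measurable_snd, ← hm13,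
        Measure.map_map measurable_snd hmq13]
      rfl
    rw [e1]
    exact hβadm.1.2
  have hπdiag : piHat {p : (Rd d × Rd d) × (Rd d × Rd d) | p.1.2 = p.2.2}ᶜ = 0 := by
    rw [hpiHat, Measure.map_apply measurable_snd measurable_diagSet.compl]
    have hae : ∀ᵐ q ∂η, q.2.1.2 = q.2.2.2 := by
      filter_upwards [hd1, hd2] with q h1 h2
      exact h1.trans h2
    exact ae_iff.mp hae
  have hπadm : IsAdmissiblePlan μ σ piHat := ⟨⟨hπfst, hπsnd⟩, hπdiag⟩
  -- lintegral bounds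
  have hLA : ∫⁻ q, (‖q.2.1.1 - q.1.1‖₊ : ℝ≥0∞)^2 ∂η ≤ (‖s‖₊ : ℝ≥0∞)^2 * planCost γ := by
    rw [hI1]; exact hlamCost
  have hLB : ∫⁻ q, (‖q.1.1 - q.2.2.1‖₊ : ℝ≥0∞)^2 ∂η = (‖1-s‖₊ : ℝ≥0∞)^2 * planCost γ := by
    rw [hI2, hβs, bwdPlan_cost]
  have hLCge : planCost γ ≤ ∫⁻ q, (‖q.2.1.1 - q.2.2.1‖₊ : ℝ≥0∞)^2 ∂η := by
    rw [hI3]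
    exact hKopt.trans (W2nuSq_le_planCost hνμ hπadm)
  have hmA : Measurable (fun q : (Rd d × Rd d) × ((Rd d × Rd d) × (Rd d × Rd d)) =>
      q.2.1.1 - q.1.1) := measurable_snd.fst.fst.sub measurable_fst.fst
  have hmB : Measurable (fun q : (Rd d × Rd d) × ((Rd d × Rd d) × (Rd d × Rd d)) =>
      q.1.1 - q.2.2.1) := measurable_fst.fst.sub measurable_snd.snd.fst
  have hmC : Measurable (fun q : (Rd d × Rd d) × ((Rd d × Rd d) × (Rd d × Rd d)) =>
      q.2.1.1 - q.2.2.1) := measurable_snd.fst.fst.sub measurable_snd.snd.fst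
  have hLAfin : ∫⁻ q, (‖q.2.1.1 - q.1.1‖₊ : ℝ≥0∞)^2 ∂η < ⊤ :=
    lt_of_le_of_lt hLA (ENNReal.mul_lt_top (ENNReal.pow_lt_top ENNReal.coe_lt_top) hKfin)
  have hLBfin : ∫⁻ q, (‖q.1.1 - q.2.2.1‖₊ : ℝ≥0∞)^2 ∂η < ⊤ := by
    rw [hLB]
    exact ENNReal.mul_lt_top (ENNReal.pow_lt_top ENNReal.coe_lt_top) hKfin
  have hLCfin : ∫⁻ q, (‖q.2.1.1 - q.2.2.1‖₊ : ℝ≥0∞)^2 ∂η < ⊤ := by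
    have hpt : ∀ q : (Rd d × Rd d) × ((Rd d × Rd d) × (Rd d × Rd d)),
        (‖q.2.1.1 - q.2.2.1‖₊ : ℝ≥0∞)^2
          ≤ 4*(‖q.2.1.1 - q.1.1‖₊ : ℝ≥0∞)^2 + 4*(‖q.1.1 - q.2.2.1‖₊ : ℝ≥0∞)^2 := by
      intro q
      refine sq_add_le_ennreal ?_
      have h1 : ‖q.2.1.1 - q.2.2.1‖₊ ≤ ‖q.2.1.1 - q.1.1‖₊ + ‖q.1.1 - q.2.2.1‖₊ := by
        have := nnnorm_add_le (q.2.1.1 - q.1.1) (q.1.1 - q.2.2.1)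
        rwa [sub_add_sub_cancel] at this
      exact_mod_cast h1
    calc ∫⁻ q, (‖q.2.1.1 - q.2.2.1‖₊ : ℝ≥0∞)^2 ∂η
        ≤ ∫⁻ q, (4*(‖q.2.1.1 - q.1.1‖₊ : ℝ≥0∞)^2
            + 4*(‖q.1.1 - q.2.2.1‖₊ : ℝ≥0∞)^2) ∂η := lintegral_mono hpt
      _ = 4 * ∫⁻ q, (‖q.2.1.1 - q.1.1‖₊ : ℝ≥0∞)^2 ∂η
            + 4 * ∫⁻ q, (‖q.1.1 - q.2.2.1‖₊ : ℝ≥0∞)^2 ∂η := by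
          rw [lintegral_add_left (((hmA.nnnorm.coe_nnreal_ennreal).pow_const 2).const_mul 4),
            lintegral_const_mul 4 ((hmA.nnnorm.coe_nnreal_ennreal).pow_const 2),
            lintegral_const_mul 4 ((hmB.nnnorm.coe_nnreal_ennreal).pow_const 2)]
      _ < ⊤ := ENNReal.add_lt_top.mpr ⟨ENNReal.mul_lt_top (by simp) hLAfin,
            ENNReal.mul_lt_top (by simp) hLBfin⟩
  -- pass to real integrals
  set k := (planCost γ).toReal with hk
  have hk0 : 0 ≤ k := ENNReal.toReal_nonneg
  have htoReal : ∀ c : ℝ, (((‖c‖₊ : ℝ≥0∞))^2 * planCost γ).toReal = c^2 * k := by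
    intro c
    rw [ENNReal.toReal_mul, ← ENNReal.coe_pow, ENNReal.coe_toReal]
    congr 1
    rw [NNReal.coe_pow, coe_nnnorm, Real.norm_eq_abs, sq_abs]
  have hmulne : ((‖s‖₊ : ℝ≥0∞))^2 * planCost γ ≠ ⊤ :=
    ENNReal.mul_ne_top (ENNReal.pow_lt_top ENNReal.coe_lt_top).ne hKfin.ne
  have hiA : ∫ q, ‖q.2.1.1 - q.1.1‖^2 ∂η ≤ s^2 * k := by
    rw [integral_normsq_eq_toReal hmA, ← htoReal s]
    exact ENNReal.toReal_mono hmulne hLA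
  have hiB : ∫ q, ‖q.1.1 - q.2.2.1‖^2 ∂η = (1-s)^2 * k := by
    rw [integral_normsq_eq_toReal hmB, hLB, htoReal (1-s)]
  have hiC : k ≤ ∫ q, ‖q.2.1.1 - q.2.2.1‖^2 ∂η := by
    rw [integral_normsq_eq_toReal hmC]
    exact ENNReal.toReal_mono hLCfin.ne hLCge
  have intA : Integrable (fun q : (Rd d × Rd d) × ((Rd d × Rd d) × (Rd d × Rd d)) =>
      ‖q.2.1.1 - q.1.1‖^2) η := integrable_normsq_of_lintegral_lt hmA hLAfin
  have intB : Integrable (fun q : (Rd d × Rd d) × ((Rd d × Rd d) × (Rd d × Rd d)) =>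
      ‖q.1.1 - q.2.2.1‖^2) η := integrable_normsq_of_lintegral_lt hmB hLBfin
  have intC : Integrable (fun q : (Rd d × Rd d) × ((Rd d × Rd d) × (Rd d × Rd d)) =>
      ‖q.2.1.1 - q.2.2.1‖^2) η := integrable_normsq_of_lintegral_lt hmC hLCfin
  -- the defect function
  set W : (Rd d × Rd d) × ((Rd d × Rd d) × (Rd d × Rd d)) → ℝ :=
    fun q => (1-s)*‖q.2.1.1 - q.1.1‖^2 + s*‖q.1.1 - q.2.2.1‖^2
      - s*(1-s)*‖q.2.1.1 - q.2.2.1‖^2 with hW_def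
  have hWid : ∀ q : (Rd d × Rd d) × ((Rd d × Rd d) × (Rd d × Rd d)),
      W q = ‖(1-s) • (q.2.1.1 - q.1.1) + s • (q.2.2.1 - q.1.1)‖^2 := by
    intro q
    simp only [hW_def]
    rw [interp_norm_identity s (q.2.1.1 - q.1.1) (q.2.2.1 - q.1.1),
      sub_sub_sub_cancel_right]
    have e : ‖q.1.1 - q.2.2.1‖ = ‖q.2.2.1 - q.1.1‖ := norm_sub_rev _ _
    rw [e]
  have hWnn : ∀ q, 0 ≤ W q := fun q => by rw [hWid q]; exact sq_nonneg _
  have hWint : Integrable W η := by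
    simp only [hW_def]
    exact ((intA.const_mul (1-s)).add (intB.const_mul s)).sub (intC.const_mul (s*(1-s)))
  have hWint1 : Integrable (fun q : (Rd d × Rd d) × ((Rd d × Rd d) × (Rd d × Rd d)) =>
      (1-s)*‖q.2.1.1 - q.1.1‖^2) η := intA.const_mul _
  have hWint2 : Integrable (fun q : (Rd d × Rd d) × ((Rd d × Rd d) × (Rd d × Rd d)) =>
      s*‖q.1.1 - q.2.2.1‖^2) η := intB.const_mul _
  have hWint3 : Integrable (fun q : (Rd d × Rd d) × ((Rd d × Rd d) × (Rd d × Rd d)) =>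
      s*(1-s)*‖q.2.1.1 - q.2.2.1‖^2) η := intC.const_mul _
  have hWint12 : Integrable (fun q : (Rd d × Rd d) × ((Rd d × Rd d) × (Rd d × Rd d)) =>
      (1-s)*‖q.2.1.1 - q.1.1‖^2 + s*‖q.1.1 - q.2.2.1‖^2) η := hWint1.add hWint2
  have hWle : ∫ q, W q ∂η ≤ 0 := by
    simp only [hW_def]
    rw [integral_sub hWint12 hWint3, integral_add hWint1 hWint2,
      integral_const_mul, integral_const_mul, integral_const_mul]
    have h1 : (1-s) * ∫ q, ‖q.2.1.1 - q.1.1‖^2 ∂η ≤ (1-s) * (s^2*k) :=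
      mul_le_mul_of_nonneg_left hiA (by linarith)
    have h3 : s*(1-s)*k ≤ s*(1-s) * ∫ q, ‖q.2.1.1 - q.2.2.1‖^2 ∂η :=
      mul_le_mul_of_nonneg_left hiC (by nlinarith)
    rw [hiB]
    nlinarith
  have hW0 : ∫ q, W q ∂η = 0 := le_antisymm hWle (integral_nonneg hWnn)
  have hWae : ∀ᵐ q ∂η, W q = 0 := by
    have := (integral_eq_zero_iff_of_nonneg hWnn hWint).mp hW0
    filter_upwards [this] with q hq
    exact hq
  have hrel : ∀ᵐ q ∂η, (1-s) • q.2.1.1 + s • q.2.2.1 = q.1.1 := by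
    filter_upwards [hWae] with q hq
    rw [hWid q] at hq
    have hv : (1-s) • (q.2.1.1 - q.1.1) + s • (q.2.2.1 - q.1.1) = 0 := by
      have := sq_eq_zero_iff.mp hq
      exact norm_eq_zero.mp this
    have he : (1-s) • (q.2.1.1 - q.1.1) + s • (q.2.2.1 - q.1.1)
        = ((1-s) • q.2.1.1 + s • q.2.2.1) - q.1.1 := by module
    rw [he] at hv
    exact sub_eq_zero.mp hv
  -- fiberwise rigidity
  have hQ : ∀ᵐ q ∂η, ((1-s) • q.2.1.1 + s • q.2.2.1 = q.1.1
      ∧ q.2.1.2 = q.1.2 ∧ q.2.2.2 = q.1.2) := by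
    filter_upwards [hrel, hd1, hd2] with q h1 h2 h3
    exact ⟨h1, h2, h3.symm⟩
  have hfib := Measure.ae_ae_of_ae_compProd (μ := ρs) (κ := κ1 ×ₖ κ2) hQ
  filter_upwards [hfib] with a ha
  rw [Kernel.prod_apply] at ha
  exact fiber_rigid hs0 hs1 a (κ1 a) (κ2 a) ha

/-- Uniqueness of optimal admissible plans to an interior geodesic point. -/
lemma plan_eq_fwdPlan [IsProbabilityMeasure μ] [IsProbabilityMeasure σ]
    [IsProbabilityMeasure γ] [IsProbabilityMeasure lam]
    (hνμ : μ.map Prod.snd = ν) (hγadm : IsAdmissiblePlan μ σ γ)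
    (hKfin : planCost γ < ⊤) (hKopt : planCost γ ≤ W2nuSq ν μ σ)
    {s : ℝ} (hs0 : 0 < s) (hs1 : s < 1)
    (hlamAdm : IsAdmissiblePlan μ (geodesicInterp γ s) lam)
    (hlamCost : planCost lam ≤ (‖s‖₊ : ℝ≥0∞)^2 * planCost γ) :
    lam = fwdPlan d s γ := by
  have hfwdAdm := fwdPlan_adm hγadm s
  haveI hρsP : IsProbabilityMeasure (geodesicInterp γ s) := by
    rw [geodesicInterp_eq]
    exact Measure.isProbabilityMeasure_map (measurable_interpMap s).aemeasurable
  have h1 := plan_fiber_formula hνμ hγadm hKfin hKopt hs0 hs1 hlamAdm hlamCost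
  have h2 := plan_fiber_formula hνμ hγadm hKfin hKopt hs0 hs1 hfwdAdm
    (le_of_eq (fwdPlan_cost s))
  have hker : ∀ᵐ a ∂(geodesicInterp γ s),
      (lam.map Prod.swap).condKernel a = ((fwdPlan d s γ).map Prod.swap).condKernel a := by
    filter_upwards [h1, h2] with a ha1 ha2
    exact ha1.trans ha2.symm
  have hfstlam : (lam.map Prod.swap).fst = geodesicInterp γ s := by
    rw [Measure.fst, Measure.map_map measurable_fst measurable_swap]
    exact hlamAdm.1.2
  have hfstfwd : ((fwdPlan d s γ).map Prod.swap).fst = geodesicInterp γ s := by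
    rw [Measure.fst, Measure.map_map measurable_fst measurable_swap]
    exact hfwdAdm.1.2
  have hswap : lam.map Prod.swap = (fwdPlan d s γ).map Prod.swap := by
    have e1 : lam.map Prod.swap
        = (geodesicInterp γ s) ⊗ₘ (lam.map Prod.swap).condKernel := by
      conv_lhs => rw [← compProd_fst_condKernel' (lam.map Prod.swap)]
      rw [hfstlam]
    have e2 : (fwdPlan d s γ).map Prod.swap
        = (geodesicInterp γ s) ⊗ₘ ((fwdPlan d s γ).map Prod.swap).condKernel := by
      conv_lhs => rw [← compProd_fst_condKernel' ((fwdPlan d s γ).map Prod.swap)]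
      rw [hfstfwd]
    rw [e1, e2]
    exact compProd_congr_ae _ _ _ hker
  calc lam = (lam.map Prod.swap).map Prod.swap := (map_swap_swap lam).symm
    _ = ((fwdPlan d s γ).map Prod.swap).map Prod.swap := by rw [hswap]
    _ = fwdPlan d s γ := map_swap_swap _

end PlanUnique

section Pairing

variable {d : ℕ}

lemma lintegral_normsq_lt_top_of_memL2 {α : Type*} [MeasurableSpace α] {m : Measure α}
    {u : α → Rd d} (hu : MemLp u 2 m) : ∫⁻ x, (‖u x‖₊:ℝ≥0∞)^2 ∂m < ⊤ := by
  have h := hu.2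
  rw [eLpNorm_eq_lintegral_rpow_enorm_toReal (by norm_num) (by norm_num)] at h
  simp only [enorm_eq_nnnorm] at h
  have h2 : (∫⁻ x, (‖u x‖₊:ℝ≥0∞) ^ ((2:ℝ≥0∞).toReal) ∂m) < ⊤ := by
    by_contra htop
    rw [not_lt, top_le_iff] at htop
    rw [htop] at h
    simp [ENNReal.top_rpow_of_pos] at h
  have he : ∀ x : α, (‖u x‖₊:ℝ≥0∞) ^ ((2:ℝ≥0∞).toReal) = (‖u x‖₊:ℝ≥0∞)^2 := by
    intro x
    rw [show ((2:ℝ≥0∞).toReal) = ((2:ℕ):ℝ) by norm_num, ENNReal.rpow_natCast]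
  rwa [lintegral_congr he] at h2

/-- Cauchy–Schwarz lower bound for the pairing against any coupling with first marginal `μ`. -/
lemma pairing_ge {μ : Measure (Rd d × Rd d)} [IsProbabilityMeasure μ]
    {u : Rd d × Rd d → Rd d} (hu : MemLp u 2 μ)
    {γ' : Measure ((Rd d × Rd d) × (Rd d × Rd d))}
    (hm1 : γ'.map Prod.fst = μ) (hcost : planCost γ' < ⊤) :
    -(((∫⁻ p, (‖u p‖₊:ℝ≥0∞)^2 ∂μ) ^ (1/2:ℝ) * (planCost γ') ^ (1/2:ℝ)).toReal)
      ≤ pairing u γ' := by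
  have hA : ∫⁻ p, (‖u p‖₊:ℝ≥0∞)^2 ∂μ < ⊤ := lintegral_normsq_lt_top_of_memL2 hu
  have hMne : (∫⁻ p, (‖u p‖₊:ℝ≥0∞)^2 ∂μ) ^ (1/2:ℝ) * (planCost γ') ^ (1/2:ℝ) ≠ ⊤ :=
    ENNReal.mul_ne_top (ENNReal.rpow_lt_top_of_nonneg (by norm_num) hA.ne).ne
      (ENNReal.rpow_lt_top_of_nonneg (by norm_num) hcost.ne).ne
  set f : ((Rd d × Rd d) × (Rd d × Rd d)) → ℝ := fun p => ⟪u p.1, p.2.1 - p.1.1⟫ with hf_def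
  have hqmp : Measure.QuasiMeasurePreserving (Prod.fst :
      ((Rd d × Rd d) × (Rd d × Rd d)) → Rd d × Rd d) γ' μ :=
    (MeasurePreserving.mk measurable_fst hm1).quasiMeasurePreserving
  have hu1 : AEStronglyMeasurable (fun p : (Rd d × Rd d) × (Rd d × Rd d) => u p.1) γ' :=
    hu.1.comp_quasiMeasurePreserving hqmp
  have hfAE : AEStronglyMeasurable f γ' :=
    hu1.inner (measurable_snd.fst.sub measurable_fst.fst).aestronglyMeasurable
  by_cases hint : Integrable f γ'
  · have h1 : -(∫ p, ‖f p‖ ∂γ') ≤ ∫ p, f p ∂γ' := by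
      have := norm_integral_le_integral_norm (μ := γ') f
      have h2 := abs_le.mp (by rwa [Real.norm_eq_abs] at this)
      linarith [h2.1]
    have h2 : ∫ p, ‖f p‖ ∂γ' = (∫⁻ p, (‖f p‖₊ : ℝ≥0∞) ∂γ').toReal := by
      rw [integral_norm_eq_lintegral_enorm hfAE]
      simp only [enorm_eq_nnnorm]
    have h3 : ∫⁻ p, (‖f p‖₊ : ℝ≥0∞) ∂γ'
        ≤ (∫⁻ p, (‖u p‖₊:ℝ≥0∞)^2 ∂μ) ^ (1/2:ℝ) * (planCost γ') ^ (1/2:ℝ) := by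
      have hpt : ∀ p : (Rd d × Rd d) × (Rd d × Rd d), (‖f p‖₊ : ℝ≥0∞)
          ≤ ((fun p : (Rd d × Rd d) × (Rd d × Rd d) => (‖u p.1‖₊ : ℝ≥0∞))
            * (fun p : (Rd d × Rd d) × (Rd d × Rd d) => (‖p.2.1 - p.1.1‖₊ : ℝ≥0∞))) p := by
        intro p
        have := nnnorm_inner_le_nnnorm (𝕜 := ℝ) (u p.1) (p.2.1 - p.1.1)
        simp only [hf_def, Pi.mul_apply]
        exact_mod_cast this
      refine (lintegral_mono hpt).trans ?_
      have hg1 : AEMeasurable (fun p : (Rd d × Rd d) × (Rd d × Rd d) =>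
          (‖u p.1‖₊ : ℝ≥0∞)) γ' := hu1.enorm
      have hg2 : AEMeasurable (fun p : (Rd d × Rd d) × (Rd d × Rd d) =>
          (‖p.2.1 - p.1.1‖₊ : ℝ≥0∞)) γ' :=
        ((measurable_snd.fst.sub measurable_fst.fst).nnnorm.coe_nnreal_ennreal).aemeasurable
      have hhold := ENNReal.lintegral_mul_le_Lp_mul_Lq γ'
        Real.HolderConjugate.two_two hg1 hg2
      refine hhold.trans (le_of_eq ?_)
      have e2 : ∀ x : ℝ≥0∞, x ^ (2:ℝ) = x^2 := fun x => by
        rw [show (2:ℝ) = ((2:ℕ):ℝ) by norm_num, ENNReal.rpow_natCast]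
      have eA : ∫⁻ p : (Rd d × Rd d) × (Rd d × Rd d), (‖u p.1‖₊ : ℝ≥0∞) ^ (2:ℝ) ∂γ'
          = ∫⁻ p, (‖u p‖₊:ℝ≥0∞)^2 ∂μ := by
        rw [lintegral_congr (g := fun p : (Rd d × Rd d) × (Rd d × Rd d) =>
          (‖u p.1‖₊ : ℝ≥0∞)^2) (fun p : (Rd d × Rd d) × (Rd d × Rd d) =>
            e2 (‖u p.1‖₊ : ℝ≥0∞)), ← hm1]
        have hf' : AEMeasurable (fun x : Rd d × Rd d => (‖u x‖₊:ℝ≥0∞)^2)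
            (γ'.map Prod.fst) := by
          rw [hm1]; exact hu.1.enorm.pow_const 2
        exact (lintegral_map' hf' measurable_fst.aemeasurable).symm
      have eB : ∫⁻ p : (Rd d × Rd d) × (Rd d × Rd d), (‖p.2.1 - p.1.1‖₊ : ℝ≥0∞) ^ (2:ℝ) ∂γ'
          = planCost γ' := by
        rw [lintegral_congr (g := fun p : (Rd d × Rd d) × (Rd d × Rd d) =>
          (‖p.2.1 - p.1.1‖₊ : ℝ≥0∞)^2) (fun p : (Rd d × Rd d) × (Rd d × Rd d) =>
            e2 (‖p.2.1 - p.1.1‖₊ : ℝ≥0∞))]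
        apply lintegral_congr
        intro p
        rw [show p.2.1 - p.1.1 = -(p.1.1 - p.2.1) by abel, nnnorm_neg]
      rw [eA, eB]
    have h4 : (∫⁻ p, (‖f p‖₊ : ℝ≥0∞) ∂γ').toReal
        ≤ (((∫⁻ p, (‖u p‖₊:ℝ≥0∞)^2 ∂μ) ^ (1/2:ℝ) * (planCost γ') ^ (1/2:ℝ))).toReal :=
      ENNReal.toReal_mono hMne h3
    calc -(((∫⁻ p, (‖u p‖₊:ℝ≥0∞)^2 ∂μ) ^ (1/2:ℝ) * (planCost γ') ^ (1/2:ℝ)).toReal)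
        ≤ -((∫⁻ p, (‖f p‖₊ : ℝ≥0∞) ∂γ').toReal) := neg_le_neg h4
      _ = -(∫ p, ‖f p‖ ∂γ') := by rw [h2]
      _ ≤ ∫ p, f p ∂γ' := h1
      _ = pairing u γ' := rfl
  · rw [pairing, ← hf_def, integral_undef hint]
    simp only [Left.neg_nonpos_iff]
    exact ENNReal.toReal_nonneg

end Pairing

section PairingFwd

variable {d : ℕ}

lemma interp_sub_self (s : ℝ) (x y : Rd d) : ((1 - s) • x + s • y) - x = s • (y - x) := by
  module

lemma pairing_fwdPlan {μ : Measure (Rd d × Rd d)}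
    {γ : Measure ((Rd d × Rd d) × (Rd d × Rd d))} (hm1 : γ.map Prod.fst = μ)
    {u : Rd d × Rd d → Rd d} (hu : AEStronglyMeasurable u μ) (s : ℝ) :
    pairing u (fwdPlan d s γ) = s * pairing u γ := by
  have hmf : Measurable (fun p : ((Rd d × Rd d) × (Rd d × Rd d)) => (p.1, interpMap d s p)) :=
    measurable_fst.prodMk (measurable_interpMap s)
  have hfwdfst : (fwdPlan d s γ).map Prod.fst = μ := by
    rw [fwdPlan, Measure.map_map measurable_fst hmf]
    exact hm1
  have hqmp : Measure.QuasiMeasurePreserving (Prod.fst :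
      ((Rd d × Rd d) × (Rd d × Rd d)) → Rd d × Rd d) (fwdPlan d s γ) μ :=
    (MeasurePreserving.mk measurable_fst hfwdfst).quasiMeasurePreserving
  have hqmpγ : Measure.QuasiMeasurePreserving (Prod.fst :
      ((Rd d × Rd d) × (Rd d × Rd d)) → Rd d × Rd d) γ μ :=
    (MeasurePreserving.mk measurable_fst hm1).quasiMeasurePreserving
  have hAESM : AEStronglyMeasurable
      (fun q : (Rd d × Rd d) × (Rd d × Rd d) => ⟪u q.1, q.2.1 - q.1.1⟫) (fwdPlan d s γ) :=
    (hu.comp_quasiMeasurePreserving hqmp).inner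
      (measurable_snd.fst.sub measurable_fst.fst).aestronglyMeasurable
  have e1 : pairing u (fwdPlan d s γ)
      = ∫ p, ⟪u p.1, (interpMap d s p).1 - p.1.1⟫ ∂γ := by
    rw [pairing, fwdPlan, integral_map hmf.aemeasurable]
    rw [← fwdPlan]
    exact hAESM
  rw [e1]
  have e2 : ∀ p : (Rd d × Rd d) × (Rd d × Rd d),
      ⟪u p.1, (interpMap d s p).1 - p.1.1⟫ = s * ⟪u p.1, p.2.1 - p.1.1⟫ := by
    intro p
    show ⟪u p.1, ((1 - s) • p.1.1 + s • p.2.1) - p.1.1⟫ = _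
    rw [interp_sub_self, real_inner_smul_right]
  rw [integral_congr_ae (ae_of_all _ e2), integral_const_mul]
  rfl

end PairingFwd

/-- variational characterization of the fibered Fréchet subdifferential for
λ-geodesically convex functionals: `u ∈ ∂_{W_{2,ν}} E[μ]` if and only if for every
`σ ∈ D(E)` and every optimal ν-admissible plan `γ ∈ Γ_{o,ν}(μ,σ)` along whose geodesic `E` is
λ-convex, `E[σ] - E[μ] ≥ ∫ ⟪u(x,ω), x'-x⟫ dγ + (λ/2) W_{2,ν}²(μ,σ)`. -/
theorem statement9 {d : ℕ} (ν : Measure (Rd d)) [IsProbabilityMeasure ν]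
    (E : Measure (Rd d × Rd d) → EReal) (lam : ℝ)
    (hbot : ∀ σ, MemP2nu ν σ → E σ ≠ ⊥)
    (hconv : GeodesicallyConvex ν E lam)
    (μ : Measure (Rd d × Rd d)) (hμ : MemP2nu ν μ) (hdom : E μ ≠ ⊤)
    (u : Rd d × Rd d → Rd d) (hu : MemLp u 2 μ) :
    MemSubdiff ν E μ u ↔
      ∀ σ, MemP2nu ν σ → E σ ≠ ⊤ →
        ∀ γ, IsOptimalAdmissiblePlan ν μ σ γ → ConvexAlongPlan ν E lam μ σ γ →
          E μ + ((pairing u γ + (lam / 2) * (W2nu ν μ σ) ^ 2 : ℝ) : EReal) ≤ E σ := by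
  haveI hμP : IsProbabilityMeasure μ := hμ.1
  have hEμ : ((E μ).toReal : EReal) = E μ := EReal.coe_toReal hdom (hbot μ hμ)
  constructor
  · -- forward: subdifferential implies the variational inequality
    rintro ⟨-, hsub⟩ σ hσ hσtop γ hγopt hγcvx
    haveI hσP : IsProbabilityMeasure σ := hσ.1
    haveI : IsProbabilityMeasure γ := isProbabilityMeasure_of_map_fst hγopt.1.1.1
    have hEσ : ((E σ).toReal : EReal) = E σ := EReal.coe_toReal hσtop (hbot σ hσ)
    set eμ := (E μ).toReal with heμdef
    set eσ := (E σ).toReal with heσdef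
    set W := W2nu ν μ σ with hWdef
    have hW0 : 0 ≤ W := Real.sqrt_nonneg _
    have hKfin : W2nuSq ν μ σ < ⊤ := W2nuSq_lt_top hμ hσ
    have hγcost : planCost γ = W2nuSq ν μ σ := hγopt.2
    have hγKfin : planCost γ < ⊤ := by rw [hγcost]; exact hKfin
    rw [← hEμ, ← hEσ, ← EReal.coe_add, EReal.coe_le_coe_iff]
    refine le_of_forall_pos_le_add ?_
    intro c hc
    have hc2 : (0:ℝ) < 2*(W+1) := by linarith
    obtain ⟨δ, hδ0, hδ⟩ := hsub (c / (2*(W+1))) (div_pos hc hc2)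
    set ε := c / (2*(W+1)) with hεdef
    have hε : 0 < ε := div_pos hc hc2
    have hεW : ε * W ≤ c/2 := by
      rw [hεdef, div_mul_eq_mul_div, div_le_div_iff₀ hc2 (by norm_num)]
      nlinarith [hc.le, hW0]
    -- choose the interpolation parameter s
    set s' := min (1/2 : ℝ) (min (δ/(W+1)) (c/(|lam| * W^2 + 1))) with hs'def
    have hD2 : (0:ℝ) < |lam| * W^2 + 1 := by positivity
    have hs0 : 0 < s' := by
      refine lt_min (by norm_num) (lt_min (div_pos hδ0 (by linarith)) (div_pos hc hD2))
    have hs1 : s' < 1 := lt_of_le_of_lt (min_le_left _ _) (by norm_num)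
    have hsδ : s' * W ≤ δ := by
      have hsle : s' ≤ δ/(W+1) := le_trans (min_le_right _ _) (min_le_left _ _)
      calc s'*W ≤ (δ/(W+1))*W := mul_le_mul_of_nonneg_right hsle hW0
        _ ≤ δ := by
            rw [div_mul_eq_mul_div, div_le_iff₀ (by linarith : (0:ℝ) < W+1)]
            nlinarith [hδ0.le, hW0]
    have hslam : |lam| / 2 * s' * W^2 ≤ c/2 := by
      have hsle : s' ≤ c/(|lam| * W^2 + 1) := le_trans (min_le_right _ _) (min_le_right _ _)
      have h1 : |lam| / 2 * s' * W^2 ≤ |lam| / 2 * (c/(|lam| * W^2 + 1)) * W^2 :=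
        mul_le_mul_of_nonneg_right
          (mul_le_mul_of_nonneg_left hsle (by positivity)) (sq_nonneg W)
      refine h1.trans ?_
      have hcD : 0 ≤ c / (|lam| * W^2 + 1) := le_of_lt (div_pos hc hD2)
      have h4 : |lam| / 2 * (c/(|lam| * W^2 + 1)) * W^2
          = (c/(|lam| * W^2 + 1)) * (|lam| * W^2) / 2 := by ring
      rw [h4]
      have h5 : (c/(|lam| * W^2 + 1)) * (|lam| * W^2)
          ≤ (c/(|lam| * W^2 + 1)) * (|lam| * W^2 + 1) :=
        mul_le_mul_of_nonneg_left (by linarith) hcD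
      have h6 : (c/(|lam| * W^2 + 1)) * (|lam| * W^2 + 1) = c :=
        div_mul_cancel₀ c hD2.ne'
      linarith
    -- geodesic point
    have hρs2 : MemP2nu ν (geodesicInterp γ s') :=
      memP2nu_geodesicInterp hμ hσ hγopt.1 hs0.le hs1.le
    haveI : IsProbabilityMeasure (geodesicInterp γ s') := hρs2.1
    have hEρs_le := hγcvx s' ⟨hs0.le, hs1.le⟩
    have hEρs_top : E (geodesicInterp γ s') ≠ ⊤ :=
      (lt_of_le_of_lt hEρs_le (EReal.coe_lt_top _)).ne
    -- optimal plans to the geodesic point are unique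
    have hfwdAdm := fwdPlan_adm hγopt.1 s'
    have hWρsle : W2nuSq ν μ (geodesicInterp γ s') ≤ ((‖s'‖₊:ℝ≥0∞))^2 * planCost γ := by
      have h := W2nuSq_le_planCost (ν := ν) hμ.2.1 hfwdAdm
      rwa [fwdPlan_cost] at h
    obtain ⟨lam0, hlam0opt, -⟩ := hconv μ (geodesicInterp γ s') hμ hρs2 hdom hEρs_top
    haveI : IsProbabilityMeasure lam0 := isProbabilityMeasure_of_map_fst hlam0opt.1.1.1
    have hlam0eq : lam0 = fwdPlan d s' γ :=
      plan_eq_fwdPlan hμ.2.1 hγopt.1 hγKfin (le_of_eq hγcost) hs0 hs1 hlam0opt.1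
        (by rw [hlam0opt.2]; exact hWρsle)
    have hWρs : W2nuSq ν μ (geodesicInterp γ s') = ((‖s'‖₊:ℝ≥0∞))^2 * planCost γ := by
      rw [← hlam0opt.2, hlam0eq, fwdPlan_cost]
    have hfwdopt : IsOptimalAdmissiblePlan ν μ (geodesicInterp γ s') (fwdPlan d s' γ) :=
      ⟨hfwdAdm, by rw [fwdPlan_cost, hWρs]⟩
    have hSset : {r | ∃ γ', IsOptimalAdmissiblePlan ν μ (geodesicInterp γ s') γ'
        ∧ r = pairing u γ'} = {s' * pairing u γ} := by
      ext r
      simp only [Set.mem_setOf_eq, Set.mem_singleton_iff]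
      constructor
      · rintro ⟨γ', hopt', rfl⟩
        haveI : IsProbabilityMeasure γ' := isProbabilityMeasure_of_map_fst hopt'.1.1.1
        have heq : γ' = fwdPlan d s' γ :=
          plan_eq_fwdPlan hμ.2.1 hγopt.1 hγKfin (le_of_eq hγcost) hs0 hs1 hopt'.1
            (by rw [hopt'.2]; exact hWρsle)
        rw [heq, pairing_fwdPlan hγopt.1.1.1 hu.1 s']
      · rintro rfl
        exact ⟨fwdPlan d s' γ, hfwdopt, (pairing_fwdPlan hγopt.1.1.1 hu.1 s').symm⟩
    have hinf : infPairing ν μ (geodesicInterp γ s') u = s' * pairing u γ := by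
      rw [infPairing, hSset, csInf_singleton]
    have htoReal : (((‖s'‖₊ : ℝ≥0∞))^2 * planCost γ).toReal
        = s'^2 * (planCost γ).toReal := by
      rw [ENNReal.toReal_mul, ← ENNReal.coe_pow, ENNReal.coe_toReal]
      congr 1
      rw [NNReal.coe_pow, coe_nnnorm, Real.norm_eq_abs, sq_abs]
    have hWρsr : W2nu ν μ (geodesicInterp γ s') = s' * W := by
      rw [W2nu, hWρs, htoReal, hγcost, Real.sqrt_mul (sq_nonneg s'),
        Real.sqrt_sq hs0.le, hWdef, W2nu]
    -- apply the subdifferential inequality at the geodesic point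
    have hap := hδ (geodesicInterp γ s') hρs2 hEρs_top (by rw [hWρsr]; exact hsδ)
    rw [hinf, hWρsr, ← hEμ] at hap
    have hcomb := hap.trans hEρs_le
    rw [← heμdef, ← heσdef, ← hWdef, ← EReal.coe_add, EReal.coe_le_coe_iff] at hcomb
    -- algebra
    have h2 : s' * (pairing u γ - ε*W)
        ≤ s' * ((eσ - eμ) - lam/2*(1-s')*W^2) := by linear_combination hcomb
    have h3 : pairing u γ - ε*W ≤ (eσ - eμ) - lam/2*(1-s')*W^2 :=
      (mul_le_mul_iff_right₀ hs0).mp h2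
    have h3' : pairing u γ - ε*W ≤ eσ - eμ - lam/2*W^2 + lam/2*s'*W^2 := by
      linear_combination h3
    have habs : lam/2*s'*W^2 ≤ |lam| / 2 * s' * W^2 := by
      have h1 : lam/2 ≤ |lam|/2 := by linarith [le_abs_self lam]
      exact mul_le_mul_of_nonneg_right
        (mul_le_mul_of_nonneg_right h1 hs0.le) (sq_nonneg W)
    linarith [h3', hεW, hslam, habs]
  · -- backward: the variational inequality implies the subdifferential property
    intro hRHS
    refine ⟨hu, ?_⟩
    intro ε hε
    refine ⟨if 0 ≤ lam then 1 else 2*ε/(-lam), ?_, ?_⟩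
    · split_ifs with h
      · norm_num
      · push_neg at h
        exact div_pos (by linarith) (by linarith)
    · intro σ hσ hσtop hWδ
      haveI : IsProbabilityMeasure σ := hσ.1
      obtain ⟨γ₀, hγ₀opt, hγ₀cvx⟩ := hconv μ σ hμ hσ hdom hσtop
      have hkey := hRHS σ hσ hσtop γ₀ hγ₀opt hγ₀cvx
      have hEσ : ((E σ).toReal : EReal) = E σ := EReal.coe_toReal hσtop (hbot σ hσ)
      have hW0 : 0 ≤ W2nu ν μ σ := Real.sqrt_nonneg _
      have hKfin : W2nuSq ν μ σ < ⊤ := W2nuSq_lt_top hμ hσ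
      have hBdd : BddBelow {r | ∃ γ', IsOptimalAdmissiblePlan ν μ σ γ'
          ∧ r = pairing u γ'} := by
        refine ⟨-(((∫⁻ p, (‖u p‖₊:ℝ≥0∞)^2 ∂μ) ^ (1/2:ℝ)
          * (W2nuSq ν μ σ) ^ (1/2:ℝ)).toReal), ?_⟩
        rintro r ⟨γ', hopt', rfl⟩
        have h1 := pairing_ge hu hopt'.1.1.1 (by rw [hopt'.2]; exact hKfin)
        rwa [hopt'.2] at h1
      have hinf_le : infPairing ν μ σ u ≤ pairing u γ₀ := csInf_le hBdd ⟨γ₀, hγ₀opt, rfl⟩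
      rw [← hEμ, ← hEσ, ← EReal.coe_add, EReal.coe_le_coe_iff] at hkey ⊢
      have hlamW : -(ε * W2nu ν μ σ) ≤ lam/2 * (W2nu ν μ σ)^2 := by
        split_ifs at hWδ with hl
        · nlinarith [sq_nonneg (W2nu ν μ σ), mul_nonneg hε.le hW0,
            mul_nonneg hl (sq_nonneg (W2nu ν μ σ))]
        · push_neg at hl
          have h2 : (-lam)/2 * (W2nu ν μ σ * W2nu ν μ σ)
              ≤ (-lam)/2 * ((2*ε/(-lam)) * W2nu ν μ σ) :=
            mul_le_mul_of_nonneg_left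
              (mul_le_mul_of_nonneg_right hWδ hW0) (by linarith)
          have h3 : (-lam)/2 * ((2*ε/(-lam)) * W2nu ν μ σ) = ε * W2nu ν μ σ := by
            have hne : lam ≠ 0 := hl.ne
            first
            | (field_simp [hne]; ring)
            | field_simp [hne]
          nlinarith [h2, h3]
      linarith [hkey, hinf_le, hlamW]

end FGF
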